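/- arXiv:2101.01509 — 6 statements merged into one kernel-verified Lean document; each statement's English description precedes it below -/
import Mathlib

section
/- Let t ≥ 2 be an even integer, n, k, d ≥ 1 integers, c ∈ ℕ, and S ⊆ [n] with |S| ≥ n/k^c. Suppose the numbers z_r^{i,j} ∈ {0,1} (for r ∈ [n], i,j ∈ [k]) satisfy Σ_{i,j=1}^k z_r^{i,j} = 1 for every r, and the vectors v_1, …, v_n ∈ ℝ^d satisfy z_r^{i,j} · z_s^{i,j} · (v_r − v_s) = 0 for all r, s ∈ [n] and i, j ∈ [k], and for every u ∈ ℝ^d, (1/n) Σ_{r=1}^n ⟨v_r, u⟩^t ≤ 2·(4t)^{t/2}·‖u‖^t. Then (1/|S|) Σ_{r ∈ S} ‖v_r‖^2 ≤ 8 · k^{(4+2c)/t} · t. -/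
/-!
Let `f r` be the cluster pair of sample `r`; `v` is constant on each cluster. If a cluster `T`
carries the vector `w`, testing the moment bound against `u = w` gives
`#T ‖w‖^{2t} ≤ ∑ s, ⟪v s, w⟫^t ≤ n B ‖w‖^t` with `B = 2 (4t)^{t/2}`, so each cluster contributes
at most `n B` to `∑_{r ∈ S} ‖v r‖^t`, and there are `k²` clusters. The power-mean (Hölder)
inequality turns this `t`-th moment bound into the bound `(k² n B / |S|)^{2/t}` for the average of
`‖v r‖²` over `S`, and `|S| ≥ n / k^c`, `B^{2/t} ≤ 8t` finish the estimate.
-/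

open Finset

lemma exists_eq_one_of_sum_eq_one {ι : Type*} [Fintype ι] {w : ι → ℝ}
    (h01 : ∀ i, w i = 0 ∨ w i = 1) (hsum : ∑ i, w i = 1) : ∃ i, w i = 1 := by
  by_contra! h
  have : ∑ i, w i = 0 := sum_eq_zero fun i _ => (h01 i).resolve_right (h i)
  simp [this] at hsum

lemma sum_sq_le_card_rpow_mul_sum_pow {ι : Type*} (s : Finset ι) (x : ι → ℝ) {t : ℕ}
    (ht : 2 ≤ t) (hte : Even t) :
    ∑ i ∈ s, x i ^ 2 ≤ (#s : ℝ) ^ (1 - 2 / (t : ℝ)) * (∑ i ∈ s, x i ^ t) ^ (2 / (t : ℝ)) := by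
  obtain ⟨m, rfl⟩ := hte
  have hm : (1 : ℝ) ≤ m := by exact_mod_cast (by omega : 1 ≤ m)
  have hexp : 2 / ((m : ℝ) + m) = (m : ℝ)⁻¹ := by field_simp; ring
  have hpow : ∀ i, (x i ^ 2) ^ (m : ℝ) = x i ^ (m + m) := fun i => by
    rw [Real.rpow_natCast, ← pow_mul, two_mul]
  simpa [hexp, hpow] using
    Real.inner_le_weight_mul_Lp_of_nonneg s hm (fun _ => 1) (fun i => x i ^ 2)
      (fun _ => zero_le_one) (fun i => sq_nonneg _)

section Clusters

variable {E : Type*} [NormedAddCommGroup E] [InnerProductSpace ℝ E]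
  {ι : Type*} [Fintype ι] {t : ℕ} {v : ι → E} {M : ℝ}

lemma sum_norm_pow_le_of_forall_eq (hte : Even t) (ht0 : t ≠ 0) (hM : 0 ≤ M)
    (hmom : ∀ u, ∑ r, (inner ℝ (v r) u) ^ t ≤ M * ‖u‖ ^ t)
    {T : Finset ι} (hT : ∀ r ∈ T, ∀ s ∈ T, v r = v s) :
    ∑ r ∈ T, ‖v r‖ ^ t ≤ M := by
  obtain rfl | ⟨r, hr⟩ := T.eq_empty_or_nonempty
  · simpa using hM
  have hconst : ∀ s ∈ T, v s = v r := fun s hs => hT s hs r hr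
  rw [sum_congr rfl fun s hs => by rw [hconst s hs], sum_const, nsmul_eq_mul]
  obtain h0 | hpos := (norm_nonneg (v r)).eq_or_lt
  · simpa [← h0, zero_pow ht0] using hM
  have key : (#T : ℝ) * ‖v r‖ ^ t * ‖v r‖ ^ t ≤ M * ‖v r‖ ^ t :=
    calc (#T : ℝ) * ‖v r‖ ^ t * ‖v r‖ ^ t
        = ∑ s ∈ T, (inner ℝ (v s) (v r)) ^ t := by
          rw [sum_congr rfl fun s hs => by rw [hconst s hs, real_inner_self_eq_norm_sq],
            sum_const, nsmul_eq_mul]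
          ring
      _ ≤ ∑ s, (inner ℝ (v s) (v r)) ^ t :=
          sum_le_sum_of_subset_of_nonneg (subset_univ _) fun s _ _ => hte.pow_nonneg _
      _ ≤ M * ‖v r‖ ^ t := hmom (v r)
  exact le_of_mul_le_mul_right key (pow_pos hpos t)

lemma sum_norm_pow_le_card_mul {κ : Type*} [Fintype κ] [DecidableEq κ] (hte : Even t)
    (ht0 : t ≠ 0) (hM : 0 ≤ M) (hmom : ∀ u, ∑ r, (inner ℝ (v r) u) ^ t ≤ M * ‖u‖ ^ t)
    (f : ι → κ) (hf : ∀ r s, f r = f s → v r = v s) (S : Finset ι) :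
    ∑ r ∈ S, ‖v r‖ ^ t ≤ Fintype.card κ * M := by
  rw [← sum_fiberwise S f, ← nsmul_eq_mul, ← card_univ, ← sum_const]
  refine sum_le_sum fun p _ => sum_norm_pow_le_of_forall_eq hte ht0 hM hmom ?_
  simp only [mem_filter]
  exact fun r hr s hs => hf r s (hr.2.trans hs.2.symm)

end Clusters

lemma two_mul_pow_half_rpow_two_div_le {t : ℕ} (ht : 2 ≤ t) (hte : Even t) :
    (2 * (4 * t : ℝ) ^ (t / 2)) ^ (2 / (t : ℝ)) ≤ 8 * t := by
  obtain ⟨m, rfl⟩ := hte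
  have hm : (1 : ℝ) ≤ m := by exact_mod_cast (by omega : 1 ≤ m)
  have hexp : 2 / ((m + m : ℕ) : ℝ) = (m : ℝ)⁻¹ := by push_cast; field_simp; ring
  rw [hexp, Real.mul_rpow zero_le_two (by positivity), show (m + m) / 2 = m by omega,
    ← Real.rpow_natCast, ← Real.rpow_mul (by positivity), mul_inv_cancel₀ (by positivity),
    Real.rpow_one]
  have h2 : (2 : ℝ) ^ (m : ℝ)⁻¹ ≤ 2 :=
    Real.rpow_le_self_of_one_le one_le_two (inv_le_one_of_one_le₀ hm)
  nlinarith [h2]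

theorem stmt_1_general
    (t n k d : ℕ) (ht2 : 2 ≤ t) (hte : Even t)
    (hn : 0 < n) (hk : 0 < k) (c : ℕ)
    (S : Finset (Fin n)) (hS : (n : ℝ) / (k : ℝ) ^ c ≤ (S.card : ℝ))
    (z : Fin n → Fin k → Fin k → ℝ)
    (hz01 : ∀ r i j, z r i j = 0 ∨ z r i j = 1)
    (hzsum : ∀ r, ∑ i, ∑ j, z r i j = 1)
    (v : Fin n → EuclideanSpace ℝ (Fin d))
    (hconst : ∀ r s i j, (z r i j * z s i j) • (v r - v s) = 0)
    (hmom : ∀ u : EuclideanSpace ℝ (Fin d),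
      (1 / (n : ℝ)) * ∑ r, (inner ℝ (v r) u : ℝ) ^ t
        ≤ 2 * ((4 * t : ℝ)) ^ (t / 2) * ‖u‖ ^ t) :
    (1 / (S.card : ℝ)) * ∑ r ∈ S, ‖v r‖ ^ 2
      ≤ 8 * (k : ℝ) ^ (((4 : ℝ) + 2 * c) / (t : ℝ)) * t := by
  classical
  choose f hf using fun r =>
    exists_eq_one_of_sum_eq_one (w := fun p : Fin k × Fin k => z r p.1 p.2)
      (fun p => hz01 r p.1 p.2) (by rw [Fintype.sum_prod_type]; exact hzsum r)
  have hv : ∀ r s, f r = f s → v r = v s := fun r s h => by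
    have := hconst r s (f r).1 (f r).2
    rwa [hf r, h, hf s, one_mul, one_smul, sub_eq_zero] at this
  set B := 2 * ((4 * t : ℝ)) ^ (t / 2)
  set e := 2 / (t : ℝ)
  have hn' : (0 : ℝ) < n := by exact_mod_cast hn
  have hk' : (0 : ℝ) < k := by exact_mod_cast hk
  have hS' : (0 : ℝ) < #S := (by positivity : (0 : ℝ) < n / k ^ c).trans_le hS
  have hmom' : ∀ u, ∑ r, inner ℝ (v r) u ^ t ≤ n * B * ‖u‖ ^ t := fun u => by
    have := hmom u
    rwa [one_div, inv_mul_le_iff₀ hn', ← mul_assoc] at this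
  have hmoment := sum_norm_pow_le_card_mul hte (by omega) (by positivity) hmom' f hv S
  have hpowmean := sum_sq_le_card_rpow_mul_sum_pow S (fun r => ‖v r‖) ht2 hte
  simp only [Fintype.card_prod, Fintype.card_fin, Nat.cast_mul] at hmoment
  have hratio : k * k * (n * B) / #S ≤ B * k ^ (c + 2) := by
    rw [div_le_iff₀ (by positivity)] at hS
    rw [div_le_iff₀ hS']
    calc (k * k * (n * B) : ℝ) ≤ k * k * (#S * k ^ c * B) := by gcongr
      _ = B * k ^ (c + 2) * #S := by ring
  calc 1 / (#S : ℝ) * ∑ r ∈ S, ‖v r‖ ^ 2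
      ≤ 1 / #S * (#S ^ (1 - e) * (k * k * (n * B)) ^ e) := by
        gcongr
        exact hpowmean.trans (by gcongr)
    _ = (k * k * (n * B) / #S) ^ e := by
        rw [Real.div_rpow (by positivity) hS'.le, Real.rpow_sub hS', Real.rpow_one]
        field_simp
    _ ≤ (B * k ^ (c + 2)) ^ e := by gcongr
    _ = B ^ e * k ^ (((4 : ℝ) + 2 * c) / t) := by
        rw [Real.mul_rpow (by positivity) (by positivity), ← Real.rpow_natCast,
          ← Real.rpow_mul hk'.le]
        congr 2
        push_cast
        ring
    _ ≤ 8 * k ^ (((4 : ℝ) + 2 * c) / t) * t := by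
        rw [mul_right_comm]
        gcongr
        exact two_mul_pow_half_rpow_two_div_le ht2 hte

/-- Semantic content of the sum-of-squares derivation underlying the clustering theorem:
avg squared norm bound on a subset `S` of size at least `n / k^c`. -/
theorem stmt_1
    (t n k d : ℕ) (ht2 : 2 ≤ t) (hte : Even t)
    (hn : 0 < n) (hk : 0 < k) (hd : 0 < d) (c : ℕ)
    (S : Finset (Fin n)) (hS : (n : ℝ) / (k : ℝ) ^ c ≤ (S.card : ℝ))
    (z : Fin n → Fin k → Fin k → ℝ)
    (hz01 : ∀ r i j, z r i j = 0 ∨ z r i j = 1)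
    (hzsum : ∀ r, ∑ i, ∑ j, z r i j = 1)
    (v : Fin n → EuclideanSpace ℝ (Fin d))
    (hconst : ∀ r s i j, (z r i j * z s i j) • (v r - v s) = 0)
    (hmom : ∀ u : EuclideanSpace ℝ (Fin d),
      (1 / (n : ℝ)) * ∑ r, (inner ℝ (v r) u : ℝ) ^ t
        ≤ 2 * ((4 * t : ℝ)) ^ (t / 2) * ‖u‖ ^ t) :
    (1 / (S.card : ℝ)) * ∑ r ∈ S, ‖v r‖ ^ 2
      ≤ 8 * (k : ℝ) ^ (((4 : ℝ) + 2 * c) / (t : ℝ)) * t :=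
  stmt_1_general t n k d ht2 hte hn hk c S hS z hz01 hzsum v hconst hmom
end

section
/- Let t ≥ 2 be an even integer, n, k, d ≥ 1 integers, c ∈ ℕ, and S ⊆ [n] with |S| ≥ n/k^c. Suppose the numbers z_r^{i,j} ∈ {0,1} (for r ∈ [n], i,j ∈ [k]) satisfy Σ_{i,j=1}^k z_r^{i,j} = 1 for every r, and the vectors v_1, …, v_n ∈ ℝ^d satisfy z_r^{i,j} · z_s^{i,j} · (v_r − v_s) = 0 for all r, s ∈ [n] and i, j ∈ [k], and for every u ∈ ℝ^d, (1/n) Σ_{r=1}^n ⟨v_r, u⟩^t ≤ 2·(4t)^{t/2}·‖u‖^t. Then for every i, j ∈ [k], (1/|S|) Σ_{r ∈ S} z_r^{i,j} · ‖v_r‖^t ≤ 2 · k^c · (4t)^{t/2}. -/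
open Finset

/-!
Fix a cluster pair `(i, j)`. All `v_r` in that cluster equal one vector `w`, so testing the
moment bound at `u = w` gives `|cluster| · ‖w‖^{2t} ≤ Σ_r ⟨v_r, w⟩^t ≤ 2n(4t)^{t/2} ‖w‖^t`,
i.e. the whole cluster contributes at most `2n(4t)^{t/2}` to `Σ_r z_r ‖v_r‖^t`. Dividing by
`|S| ≥ n / k^c` gives the bound.
-/

section MomentBound

variable {ι E : Type*} [Fintype ι] [NormedAddCommGroup E] [InnerProductSpace ℝ E]

theorem sum_mul_norm_pow_le_of_moment_bound {t : ℕ} (ht : Even t) {z : ι → ℝ} {v : ι → E}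
    {M : ℝ} (hM : 0 ≤ M) (hz : ∀ r, z r = 0 ∨ z r = 1)
    (hv : ∀ r s, z r = 1 → z s = 1 → v r = v s)
    (hmom : ∀ u : E, ∑ r, inner ℝ (v r) u ^ t ≤ M * ‖u‖ ^ t) :
    ∑ r, z r * ‖v r‖ ^ t ≤ M := by
  by_cases hne : ∃ r₀, z r₀ = 1
  swap
  · have hzero : ∀ r, z r = 0 := fun r => (hz r).resolve_right fun h => hne ⟨r, h⟩
    simpa [hzero] using hM
  obtain ⟨r₀, hr₀⟩ := hne
  set w := v r₀
  have hnorm : ∀ r, z r * ‖v r‖ ^ t = z r * ‖w‖ ^ t := by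
    intro r
    rcases hz r with h | h
    · simp [h]
    · rw [hv r r₀ h hr₀]
  have hinner : ∀ r, z r * inner ℝ (v r) w ^ t = z r * ‖w‖ ^ t * ‖w‖ ^ t := by
    intro r
    rcases hz r with h | h
    · simp [h]
    · rw [hv r r₀ h hr₀, real_inner_self_eq_norm_sq, ← pow_mul, h]
      ring
  have hsum : (∑ r, z r * ‖v r‖ ^ t) * ‖w‖ ^ t ≤ M * ‖w‖ ^ t :=
    calc (∑ r, z r * ‖v r‖ ^ t) * ‖w‖ ^ t = ∑ r, z r * inner ℝ (v r) w ^ t := by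
          simp only [hnorm, hinner, Finset.sum_mul]
      _ ≤ ∑ r, inner ℝ (v r) w ^ t := by
          refine Finset.sum_le_sum fun r _ => ?_
          rcases hz r with h | h <;> simp [h, ht.pow_nonneg]
      _ ≤ M * ‖w‖ ^ t := hmom w
  rcases (pow_nonneg (norm_nonneg w) t).eq_or_lt with hw | hw
  · simpa [hnorm, ← hw] using hM
  · exact le_of_mul_le_mul_right hsum hw

theorem sum_subset_mul_norm_pow_le_of_moment_bound {t : ℕ} (ht : Even t) {z : ι → ℝ}
    {v : ι → E} {M : ℝ} (hM : 0 ≤ M) (hz : ∀ r, z r = 0 ∨ z r = 1)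
    (hv : ∀ r s, z r = 1 → z s = 1 → v r = v s)
    (hmom : ∀ u : E, ∑ r, inner ℝ (v r) u ^ t ≤ M * ‖u‖ ^ t) (S : Finset ι) :
    ∑ r ∈ S, z r * ‖v r‖ ^ t ≤ M := by
  refine le_trans ?_ (sum_mul_norm_pow_le_of_moment_bound ht hM hz hv hmom)
  refine Finset.sum_le_sum_of_subset_of_nonneg (Finset.subset_univ S) fun r _ _ => ?_
  rcases hz r with h | h <;> simp [h]

end MomentBound

theorem stmt_2_general
    (t n k d : ℕ) (hte : Even t)
    (hn : 0 < n) (c : ℕ)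
    (S : Finset (Fin n)) (hS : (n : ℝ) / (k : ℝ) ^ c ≤ (S.card : ℝ))
    (z : Fin n → Fin k → Fin k → ℝ)
    (hz01 : ∀ r i j, z r i j = 0 ∨ z r i j = 1)
    (v : Fin n → EuclideanSpace ℝ (Fin d))
    (hconst : ∀ r s i j, (z r i j * z s i j) • (v r - v s) = 0)
    (hmom : ∀ u : EuclideanSpace ℝ (Fin d),
      (1 / (n : ℝ)) * ∑ r, (inner ℝ (v r) u : ℝ) ^ t
        ≤ 2 * ((4 * t : ℝ)) ^ (t / 2) * ‖u‖ ^ t) :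
    ∀ i j : Fin k,
      (1 / (S.card : ℝ)) * ∑ r ∈ S, z r i j * ‖v r‖ ^ t
        ≤ 2 * (k : ℝ) ^ c * ((4 * t : ℝ)) ^ (t / 2) := by
  intro i j
  set B : ℝ := 2 * ((4 * t : ℝ)) ^ (t / 2)
  have hnpos : (0 : ℝ) < n := by exact_mod_cast hn
  have hk : 0 < k := i.pos
  have hkc : (0 : ℝ) < (k : ℝ) ^ c := by positivity
  have hSpos : (0 : ℝ) < S.card := lt_of_lt_of_le (by positivity) hS
  have hv : ∀ r s, z r i j = 1 → z s i j = 1 → v r = v s := fun r s hr hs => by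
    simpa [hr, hs, sub_eq_zero] using hconst r s i j
  have hmom' : ∀ u, ∑ r, inner ℝ (v r) u ^ t ≤ n * B * ‖u‖ ^ t := fun u => by
    have := hmom u
    rw [one_div_mul_eq_div, div_le_iff₀ hnpos] at this
    linarith
  have hcluster := sum_subset_mul_norm_pow_le_of_moment_bound hte (by positivity)
    (fun r => hz01 r i j) hv hmom' S
  rw [one_div_mul_eq_div, div_le_iff₀ hSpos]
  calc ∑ r ∈ S, z r i j * ‖v r‖ ^ t ≤ n * B := hcluster
    _ ≤ S.card * (k : ℝ) ^ c * B := by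
        gcongr
        exact (div_le_iff₀ hkc).mp hS
    _ = 2 * (k : ℝ) ^ c * ((4 * t : ℝ)) ^ (t / 2) * S.card := by ring

/-- Semantic content of the main technical lemma of the clustering argument:
for each cluster pair `(i,j)`, the weighted average of `‖v_r‖^t` over a subset `S`
of size at least `n / k^c` is bounded. -/
theorem stmt_2
    (t n k d : ℕ) (ht2 : 2 ≤ t) (hte : Even t)
    (hn : 0 < n) (hk : 0 < k) (hd : 0 < d) (c : ℕ)
    (S : Finset (Fin n)) (hS : (n : ℝ) / (k : ℝ) ^ c ≤ (S.card : ℝ))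
    (z : Fin n → Fin k → Fin k → ℝ)
    (hz01 : ∀ r i j, z r i j = 0 ∨ z r i j = 1)
    (hzsum : ∀ r, ∑ i, ∑ j, z r i j = 1)
    (v : Fin n → EuclideanSpace ℝ (Fin d))
    (hconst : ∀ r s i j, (z r i j * z s i j) • (v r - v s) = 0)
    (hmom : ∀ u : EuclideanSpace ℝ (Fin d),
      (1 / (n : ℝ)) * ∑ r, (inner ℝ (v r) u : ℝ) ^ t
        ≤ 2 * ((4 * t : ℝ)) ^ (t / 2) * ‖u‖ ^ t) :
    ∀ i j : Fin k,
      (1 / (S.card : ℝ)) * ∑ r ∈ S, z r i j * ‖v r‖ ^ t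
        ≤ 2 * (k : ℝ) ^ c * ((4 * t : ℝ)) ^ (t / 2) :=
  stmt_2_general t n k d hte hn c S hS z hz01 v hconst hmom
end

section
/- Consider an ε-corruption setup with parameters n, d, ε and C > 0. Assume the fourth-moment bounds: for every u ∈ ℝ^d, (1/n) Σ_i ⟨u, x_i − μ⟩^4 ≤ (2C)^2 · Q(u)^2 and (1/n) Σ_i ⟨u, x*_i − μ*⟩^4 ≤ (2C)^2 · Q*(u)^2, and assume 16·C^2·ε ≤ 1/4. Then for every u ∈ ℝ^d, Q(u)^2 ≤ 5 · Q*(u)^2. -/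
/-!
Put `a i = ⟪u, x i - μ⟫` and `t = ⟪u, μ - μ*⟫`, so that `a i + t = ⟪u, x*_i - μ*⟫` outside the set
`B` of indices with `x i ≠ x*_i`, and `|B| ≤ 2εn`. As `∑ a i = 0`, we get
`∑ (a i + t)² = nQ(u) + nt²`; bounding the sum outside `B` by `nQ*(u)` and completing the square in
`t` inside `B` gives `7 nQ(u) ≤ 7 nQ*(u) + 8 ∑_{B} a i²`. By Cauchy–Schwarz and the fourth-moment
bound, `(∑_{B} a i²)² ≤ |B| ∑ a i⁴ ≤ 8C²ε (nQ(u))² ≤ (nQ(u))² / 8`, so `B` carries only a small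
fraction of `nQ(u)`. The fourth-moment bound also forces `4C² ≥ 1` (when `Q(u) > 0`), which makes
`ε ≤ 1/16` and hence `|B| ≤ n/8`.
-/

open Finset

section Counting

variable {ι E : Type*} [Fintype ι] [AddCommGroup E] [Module ℝ E]

lemma card_filter_ne_one_eq_card_sub_sum (w : ι → ℝ) (hw : ∀ i, w i = 0 ∨ w i = 1) :
    (#{i | w i ≠ 1} : ℝ) = Fintype.card ι - ∑ i, w i := by
  have hsum : ∑ i, w i = #{i | w i = 1} := by
    rw [← sum_boole]
    refine sum_congr rfl fun i _ => ?_
    rcases hw i with h | h <;> simp [h]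
  have hcard := card_filter_add_card_filter_not (s := univ) (fun i => w i = 1)
  rw [card_univ] at hcard
  rw [hsum, ← hcard]
  push_cast
  ring

lemma card_filter_ne_le_of_corruption [DecidableEq E] (x y xstar : ι → E) (w : ι → ℝ) (ε : ℝ)
    (hw01 : ∀ i, w i = 0 ∨ w i = 1) (hwsum : (1 - ε) * Fintype.card ι ≤ ∑ i, w i)
    (hwxy : ∀ i, w i • (y i - x i) = 0) (hcorr : (#{i | y i ≠ xstar i} : ℝ) ≤ ε * Fintype.card ι) :
    (#{i | x i ≠ xstar i} : ℝ) ≤ 2 * ε * Fintype.card ι := by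
  classical
  have hsub : ({i | x i ≠ xstar i} : Finset ι) ⊆
      ({i | w i ≠ 1} : Finset ι) ∪ ({i | y i ≠ xstar i} : Finset ι) := by
    intro i
    simp only [mem_union, mem_filter_univ]
    contrapose!
    rintro ⟨hw, hy⟩
    have hyx := hwxy i
    rwa [hw, one_smul, sub_eq_zero, hy, eq_comm] at hyx
  have hcard : (#{i | x i ≠ xstar i} : ℝ) ≤ #{i | w i ≠ 1} + #{i | y i ≠ xstar i} := by
    exact_mod_cast (card_le_card hsub).trans (card_union_le _ _)
  rw [card_filter_ne_one_eq_card_sub_sum w hw01] at hcard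
  linarith

end Counting

lemma Finset.sum_sub_inv_card_smul_sum {ι 𝕜 E : Type*} [DivisionRing 𝕜] [CharZero 𝕜]
    [AddCommGroup E] [Module 𝕜 E] (s : Finset ι) (x : ι → E) :
    ∑ i ∈ s, (x i - (#s : 𝕜)⁻¹ • ∑ j ∈ s, x j) = 0 := by
  rcases s.eq_empty_or_nonempty with rfl | hs
  · simp
  rw [sum_sub_distrib, sum_const, ← Nat.cast_smul_eq_nsmul 𝕜, smul_smul,
    mul_inv_cancel₀ (by exact_mod_cast hs.card_pos.ne'), one_smul, sub_self]

section SumsOfSquares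

variable {ι : Type*}

lemma Finset.sum_add_const_sq (s : Finset ι) (a : ι → ℝ) (t : ℝ) :
    ∑ i ∈ s, (a i + t) ^ 2 = ∑ i ∈ s, a i ^ 2 + 2 * t * ∑ i ∈ s, a i + #s * t ^ 2 := by
  rw [sum_congr rfl fun i _ => (by ring : (a i + t) ^ 2 = a i ^ 2 + 2 * t * a i + t ^ 2),
    sum_add_distrib, sum_add_distrib, ← mul_sum, sum_const, nsmul_eq_mul]

variable [Fintype ι]

lemma sq_sum_sq_le_card_mul_sum_pow_four (B : Finset ι) (a : ι → ℝ) :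
    (∑ i ∈ B, a i ^ 2) ^ 2 ≤ #B * ∑ i, a i ^ 4 := by
  calc (∑ i ∈ B, a i ^ 2) ^ 2 ≤ #B * ∑ i ∈ B, (a i ^ 2) ^ 2 := sq_sum_le_card_mul_sum_sq
    _ ≤ #B * ∑ i, (a i ^ 2) ^ 2 := by gcongr; exact subset_univ B
    _ = #B * ∑ i, a i ^ 4 := by simp_rw [← pow_mul]

/-- Completing the square in `t` costs `(∑_{B} a i)² / (N - |B|)`, which Cauchy–Schwarz bounds by
`|B| ∑_{B} a i² / (N - |B|)`. -/
lemma card_sub_mul_sum_sq_le (a b : ι → ℝ) (t : ℝ) (B : Finset ι) (ha : ∑ i, a i = 0)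
    (hab : ∀ i ∉ B, a i + t = b i) :
    (Fintype.card ι - #B) * ∑ i, a i ^ 2 ≤
      (Fintype.card ι - #B) * ∑ i, b i ^ 2 + Fintype.card ι * ∑ i ∈ B, a i ^ 2 := by
  classical
  have hK : (0 : ℝ) ≤ Fintype.card ι - #B := sub_nonneg.mpr (by exact_mod_cast B.card_le_univ)
  set N : ℝ := (Fintype.card ι : ℝ)
  set m : ℝ := (#B : ℝ)
  set S := ∑ i ∈ B, a i
  set Z := ∑ i ∈ B, a i ^ 2
  have hS : S ^ 2 ≤ m * Z := sq_sum_le_card_mul_sum_sq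
  have hsplit : ∑ i, a i ^ 2 + N * t ^ 2 ≤ ∑ i, b i ^ 2 + (Z + 2 * t * S + m * t ^ 2) :=
    calc ∑ i, a i ^ 2 + N * t ^ 2 = ∑ i, (a i + t) ^ 2 := by
          rw [sum_add_const_sq, ha, card_univ]; ring
      _ = ∑ i ∈ Bᶜ, b i ^ 2 + ∑ i ∈ B, (a i + t) ^ 2 := by
          rw [← sum_compl_add_sum B]
          congr 1
          exact sum_congr rfl fun i hi => by rw [hab i (mem_compl.mp hi)]
      _ ≤ ∑ i, b i ^ 2 + (Z + 2 * t * S + m * t ^ 2) := by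
          rw [sum_add_const_sq]
          gcongr
          exact subset_univ _
  nlinarith [mul_le_mul_of_nonneg_left hsplit hK, sq_nonneg ((N - m) * t - S)]

lemma sq_le_five_mul_sq {N K X Y Z : ℝ} (hN : 0 < N) (hK : 7 * N ≤ 8 * K) (hX : 0 ≤ X)
    (hZ : 0 ≤ Z) (h : K * X ≤ K * Y + N * Z) (hZX : 8 * Z ^ 2 ≤ X ^ 2) : X ^ 2 ≤ 5 * Y ^ 2 := by
  have h7 : 7 * X ≤ 7 * Y + 8 * Z := by
    rcases le_total X Y with hXY | hXY
    · linarith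
    · nlinarith [mul_le_mul_of_nonneg_right hK (sub_nonneg.mpr hXY)]
  have hZle : 25 * Z ≤ 9 * X := by nlinarith
  nlinarith

lemma sq_sum_sq_le_five_mul_sq_sum_sq (a b : ι → ℝ) (t c : ℝ) (B : Finset ι)
    (ha : ∑ i, a i = 0) (hab : ∀ i ∉ B, a i + t = b i)
    (h4 : Fintype.card ι * ∑ i, a i ^ 4 ≤ c * (∑ i, a i ^ 2) ^ 2)
    (hB : 8 * c * #B ≤ Fintype.card ι) :
    (∑ i, a i ^ 2) ^ 2 ≤ 5 * (∑ i, b i ^ 2) ^ 2 := by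
  set N : ℝ := (Fintype.card ι : ℝ)
  obtain hX0 | hX := (sum_nonneg fun i _ => sq_nonneg (a i) : 0 ≤ ∑ i, a i ^ 2).eq_or_lt
  · rw [← hX0, zero_pow two_ne_zero]
    positivity
  have hCS : (∑ i, a i ^ 2) ^ 2 ≤ N * ∑ i, a i ^ 4 := by
    simpa using sq_sum_sq_le_card_mul_sum_pow_four univ a
  have hN : 0 < N := pos_of_mul_pos_left ((pow_pos hX 2).trans_le hCS) (by positivity)
  have hc : 1 ≤ c := le_of_mul_le_mul_right (by linarith) (pow_pos hX 2)
  have hm : (0 : ℝ) ≤ #B := Nat.cast_nonneg _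
  have hZ : 8 * (∑ i ∈ B, a i ^ 2) ^ 2 ≤ (∑ i, a i ^ 2) ^ 2 := by
    refine le_of_mul_le_mul_left ?_ hN
    calc N * (8 * (∑ i ∈ B, a i ^ 2) ^ 2) ≤ 8 * #B * (N * ∑ i, a i ^ 4) := by
          nlinarith [sq_sum_sq_le_card_mul_sum_pow_four B a]
      _ ≤ 8 * #B * (c * (∑ i, a i ^ 2) ^ 2) := by gcongr
      _ ≤ N * (∑ i, a i ^ 2) ^ 2 := by nlinarith
  exact sq_le_five_mul_sq hN (by nlinarith) hX.le (sum_nonneg fun i _ => sq_nonneg _)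
    (card_sub_mul_sum_sq_le a b t B ha hab) hZ

lemma sq_mean_sq_le_five_mul_sq_mean_sq (a b : ι → ℝ) (t c : ℝ) (B : Finset ι)
    (ha : ∑ i, a i = 0) (hab : ∀ i ∉ B, a i + t = b i)
    (h4 : (Fintype.card ι : ℝ)⁻¹ * ∑ i, a i ^ 4 ≤ c * ((Fintype.card ι : ℝ)⁻¹ * ∑ i, a i ^ 2) ^ 2)
    (hB : 8 * c * #B ≤ Fintype.card ι) :
    ((Fintype.card ι : ℝ)⁻¹ * ∑ i, a i ^ 2) ^ 2 ≤
      5 * ((Fintype.card ι : ℝ)⁻¹ * ∑ i, b i ^ 2) ^ 2 := by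
  set N : ℝ := (Fintype.card ι : ℝ)
  rcases eq_or_ne N 0 with hN | hN
  · simp [hN]
  have h4' : N * ∑ i, a i ^ 4 ≤ c * (∑ i, a i ^ 2) ^ 2 :=
    calc N * ∑ i, a i ^ 4 = N ^ 2 * (N⁻¹ * ∑ i, a i ^ 4) := by field_simp
      _ ≤ N ^ 2 * (c * (N⁻¹ * ∑ i, a i ^ 2) ^ 2) := by gcongr
      _ = c * (∑ i, a i ^ 2) ^ 2 := by field_simp
  rw [mul_pow, mul_pow, mul_left_comm]
  gcongr
  exact sq_sum_sq_le_five_mul_sq_sum_sq a b t c B ha hab h4' hB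

end SumsOfSquares

open Classical in
theorem stmt_5_general
    (n d : ℕ) (ε C : ℝ)
    (xstar y x : Fin n → EuclideanSpace ℝ (Fin d)) (w : Fin n → ℝ)
    (hw01 : ∀ i, w i = 0 ∨ w i = 1)
    (hwsum : (1 - ε) * n ≤ ∑ i, w i)
    (hwxy : ∀ i, w i • (y i - x i) = 0)
    (hcorr : ((Finset.univ.filter fun i => y i ≠ xstar i).card : ℝ) ≤ ε * n)
    (μ μstar : EuclideanSpace ℝ (Fin d))
    (hμ : μ = (n : ℝ)⁻¹ • ∑ i, x i)
    (Q Qstar : EuclideanSpace ℝ (Fin d) → ℝ)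
    (hQ : ∀ u, Q u = (n : ℝ)⁻¹ * ∑ i, (inner ℝ u (x i - μ) : ℝ) ^ 2)
    (hQstar : ∀ u, Qstar u = (n : ℝ)⁻¹ * ∑ i, (inner ℝ u (xstar i - μstar) : ℝ) ^ 2)
    (h4 : ∀ u, (n : ℝ)⁻¹ * ∑ i, (inner ℝ u (x i - μ) : ℝ) ^ 4 ≤ (2 * C) ^ 2 * (Q u) ^ 2)
    (hsmall : 16 * C ^ 2 * ε ≤ 1 / 4) :
    ∀ u : EuclideanSpace ℝ (Fin d),
      (Q u) ^ 2 ≤ 5 * (Qstar u) ^ 2 := by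
  intro u
  set a : Fin n → ℝ := fun i => inner ℝ u (x i - μ)
  set b : Fin n → ℝ := fun i => inner ℝ u (xstar i - μstar)
  set B : Finset (Fin n) := {i | x i ≠ xstar i}
  have hQu : Q u = (n : ℝ)⁻¹ * ∑ i, a i ^ 2 := hQ u
  have hB : (#B : ℝ) ≤ 2 * ε * n := by
    simpa using card_filter_ne_le_of_corruption x y xstar w ε hw01 (by simpa using hwsum) hwxy
      (by simpa using hcorr)
  have hsum : ∑ i, a i = 0 := by
    have hx := sum_sub_inv_card_smul_sum (𝕜 := ℝ) univ x
    rw [card_univ, Fintype.card_fin, ← hμ] at hx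
    simp only [a, ← inner_sum, hx, inner_zero_right]
  have hab : ∀ i ∉ B, a i + inner ℝ u (μ - μstar) = b i := fun i hi => by
    have hxi : x i = xstar i := by simpa [B] using hi
    show inner ℝ u (x i - μ) + _ = inner ℝ u (xstar i - μstar)
    rw [← hxi, ← inner_add_right, sub_add_sub_cancel]
  rw [hQu, hQstar u]
  simpa using sq_mean_sq_le_five_mul_sq_mean_sq a b _ (4 * C ^ 2) B hsum hab
    (by simpa [← hQu] using (h4 u).trans_eq (by ring))
    (by rw [Fintype.card_fin]; nlinarith [sq_nonneg C, (#B).cast_nonneg (α := ℝ)])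

open Classical in
/-- In an ε-corruption setup with fourth-moment bounds and `16 C² ε ≤ 1/4`,
the corrupted quadratic form is dominated: `Q u² ≤ 5 Q* u²`. -/
theorem stmt_5
    (n d : ℕ) (hn : 0 < n) (hd : 0 < d) (ε C : ℝ) (hC : 0 < C)
    (xstar y x : Fin n → EuclideanSpace ℝ (Fin d)) (w : Fin n → ℝ)
    (hw01 : ∀ i, w i = 0 ∨ w i = 1)
    (hwsum : (1 - ε) * n ≤ ∑ i, w i)
    (hwxy : ∀ i, w i • (y i - x i) = 0)
    (hcorr : ((Finset.univ.filter fun i => y i ≠ xstar i).card : ℝ) ≤ ε * n)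
    (μ μstar : EuclideanSpace ℝ (Fin d))
    (hμ : μ = (n : ℝ)⁻¹ • ∑ i, x i)
    (hμstar : μstar = (n : ℝ)⁻¹ • ∑ i, xstar i)
    (Q Qstar : EuclideanSpace ℝ (Fin d) → ℝ)
    (hQ : ∀ u, Q u = (n : ℝ)⁻¹ * ∑ i, (inner ℝ u (x i - μ) : ℝ) ^ 2)
    (hQstar : ∀ u, Qstar u = (n : ℝ)⁻¹ * ∑ i, (inner ℝ u (xstar i - μstar) : ℝ) ^ 2)
    (h4 : ∀ u, (n : ℝ)⁻¹ * ∑ i, (inner ℝ u (x i - μ) : ℝ) ^ 4 ≤ (2 * C) ^ 2 * (Q u) ^ 2)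
    (h4star : ∀ u, (n : ℝ)⁻¹ * ∑ i, (inner ℝ u (xstar i - μstar) : ℝ) ^ 4
      ≤ (2 * C) ^ 2 * (Qstar u) ^ 2)
    (hsmall : 16 * C ^ 2 * ε ≤ 1 / 4) :
    ∀ u : EuclideanSpace ℝ (Fin d),
      (Q u) ^ 2 ≤ 5 * (Qstar u) ^ 2 :=
  stmt_5_general n d ε C xstar y x w hw01 hwsum hwxy hcorr μ μstar hμ Q Qstar hQ hQstar h4 hsmall
end

section
/- There exist absolute constants K > 0 and c_0 > 0 such that the following holds. Let t ≥ 4 be an even integer, C > 0, and 0 < ε < 1 with C^2·ε ≤ c_0. Consider an ε-corruption setup with parameters n, d, ε, and assume the certifiable subgaussianity bounds: for every integer 1 ≤ t' ≤ t/2 and every u ∈ ℝ^d, (1/n) Σ_i ⟨u, x_i − μ⟩^{2t'} ≤ (C t')^{t'} · Q(u)^{t'} and (1/n) Σ_i ⟨u, x*_i − μ*⟩^{2t'} ≤ (C t')^{t'} · Q*(u)^{t'}. Then for every u ∈ ℝ^d, (Q(u) − Q*(u))^2 ≤ K · (C t)^2 · ε^{2 − 4/t} · Q*(u)^2. -/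
/-!
Everything happens on the real sequences `a i = ⟪u, x i - μ⟫` and `b i = ⟪u, x⋆ i - μ⋆⟫`: they
are centred, and outside the set `B` of at most `2εn` indices with `x i ≠ x⋆ i` they differ only
by the mean shift `δ = ⟪u, μ - μ⋆⟫`. Hölder's inequality against the moment bound of order `2s`
shows that `B` carries at most a fraction `θ = (2ε)^(1-1/s) C s` of either empirical variance,
which also bounds `δ` by `O(θ)` times the standard deviations, whence `|Q u - Q⋆ u| ≤ 24 θ Q⋆ u`.
Since `(2ε)^(-1/s) ≤ e` once `s ≥ log (1/(2ε))`, the order `s = min ⌈log (1/(2ε))⌉ (t/2)` makes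
`θ` both small (via `C² ε ≤ c₀`) and at most `3 C (t/2) (2ε)^(1-2/t)`.
-/

open Finset Real

/-- `(β ^ (s - 1) * (C * s) ^ s) ^ (1 / s)`: by Hölder, the share of the second moment carried by
a `β`-fraction of a sample whose `2s`-th moment is at most `(C s) ^ s` times the `s`-th power of
its second moment. -/
noncomputable def holderRate (β C : ℝ) (s : ℕ) : ℝ := β ^ (1 - 1 / (s : ℝ)) * (C * s)

lemma sq_mul_exp_three_sub_le {x : ℝ} (hx : 0 ≤ x) : x ^ 2 * exp (3 - x) ≤ 12 := by
  have hhalf : x / 2 ≤ exp (x / 2 - 1) := by linarith [add_one_le_exp (x / 2 - 1)]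
  have hsq : x ^ 2 ≤ 4 * exp (x - 2) := by
    calc x ^ 2 = 4 * (x / 2) ^ 2 := by ring
      _ ≤ 4 * exp (x / 2 - 1) ^ 2 := by gcongr
      _ = 4 * exp (x - 2) := by rw [← exp_nat_mul]; ring_nf
  calc x ^ 2 * exp (3 - x) ≤ 4 * exp (x - 2) * exp (3 - x) := by gcongr
    _ = 4 * exp 1 := by rw [mul_assoc, ← exp_add]; ring_nf
    _ ≤ 12 := by linarith [exp_one_lt_d9]

lemma holderRate_nonneg {β C : ℝ} (hβ : 0 ≤ β) (hC : 0 ≤ C) (s : ℕ) : 0 ≤ holderRate β C s := by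
  unfold holderRate; positivity

lemma self_le_holderRate {β C : ℝ} {s : ℕ} (hβ : 0 ≤ β) (hβ1 : β ≤ 1) (hCs : 1 ≤ C * s) :
    β ≤ holderRate β C s := by
  have : β ≤ β ^ (1 - 1 / (s : ℝ)) :=
    self_le_rpow_of_le_one hβ hβ1 (sub_le_self _ (by positivity))
  unfold holderRate
  nlinarith [rpow_nonneg hβ (1 - 1 / (s : ℝ))]

lemma holderRate_sq_le {β C : ℝ} {s : ℕ} (hβ : 0 < β) (hs : 2 ≤ s) (hsL : (s : ℝ) < -log β + 1) :
    holderRate β C s ^ 2 ≤ 12 * (C ^ 2 * β) := by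
  have hs0 : (0 : ℝ) < s := by positivity
  have hs2 : (2 : ℝ) ≤ s := by exact_mod_cast hs
  have hexp : log β * (1 - 2 / s) ≤ 3 - s := by
    have h : 0 ≤ 1 - 2 / (s : ℝ) := by rw [sub_nonneg, div_le_one hs0]; exact hs2
    have : (s - 1) * (1 - 2 / (s : ℝ)) = s - 3 + 2 / s := by field_simp; ring
    nlinarith [mul_le_mul_of_nonneg_right (by linarith : (s : ℝ) - 1 ≤ -log β) h,
      (by positivity : (0 : ℝ) ≤ 2 / s)]
  have hsplit : (β ^ (1 - 1 / (s : ℝ))) ^ 2 = β * exp (log β * (1 - 2 / s)) := by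
    rw [rpow_def_of_pos hβ, ← exp_nat_mul, ← exp_log hβ, log_exp, ← exp_add]
    ring_nf
  calc holderRate β C s ^ 2 = C ^ 2 * β * ((s : ℝ) ^ 2 * exp (log β * (1 - 2 / s))) := by
        rw [holderRate, mul_pow, hsplit]; ring
    _ ≤ C ^ 2 * β * ((s : ℝ) ^ 2 * exp (3 - s)) := by gcongr
    _ ≤ C ^ 2 * β * 12 := by gcongr; exact sq_mul_exp_three_sub_le hs0.le
    _ = 12 * (C ^ 2 * β) := by ring

lemma holderRate_le_three_mul {β C : ℝ} {s k : ℕ} (hβ : 0 < β) (hβ1 : β ≤ 1) (hC : 0 ≤ C)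
    (hs : 0 < s) (hLs : -log β ≤ s) (hsk : s ≤ k) :
    holderRate β C s ≤ 3 * holderRate β C k := by
  have hs0 : (0 : ℝ) < s := by exact_mod_cast hs
  have hsk' : (s : ℝ) ≤ k := by exact_mod_cast hsk
  have hsplit : β ^ (1 - 1 / (s : ℝ)) = β * exp (-log β / s) := by
    rw [rpow_def_of_pos hβ, ← exp_log hβ, log_exp, ← exp_add]
    ring_nf
  have he : exp (-log β / s) ≤ 3 := by
    have : -log β / s ≤ 1 := by rw [div_le_one hs0]; exact hLs
    linarith [exp_le_exp.2 this, exp_one_lt_d9]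
  have hβk : β ≤ β ^ (1 - 1 / (k : ℝ)) :=
    self_le_rpow_of_le_one hβ.le hβ1 (sub_le_self _ (by positivity))
  calc holderRate β C s = β * exp (-log β / s) * (C * s) := by rw [holderRate, hsplit]
    _ ≤ β * 3 * (C * k) := by gcongr
    _ = 3 * (β * (C * k)) := by ring
    _ ≤ 3 * (β ^ (1 - 1 / (k : ℝ)) * (C * k)) := by gcongr

lemma exists_holderRate_le {β C : ℝ} {k : ℕ} (hk : 2 ≤ k) (hC : 1 ≤ C) (hβ : 0 < β)
    (hCβ : C ^ 2 * β ≤ 1 / 10 ^ 6) :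
    ∃ s, 1 ≤ s ∧ s ≤ k ∧ holderRate β C s ≤ 1 / 100 ∧
      holderRate β C s ≤ 3 * holderRate β C k := by
  have hβ1 : β ≤ 1 / 10 ^ 6 := (le_mul_of_one_le_left hβ.le (one_le_pow₀ hC)).trans hCβ
  have hL : 1 < -log β := by
    have : β < exp (-1) := by linarith [exp_neg_one_gt_d9]
    linarith [(log_lt_iff_lt_exp hβ).2 this]
  set s := min ⌈-log β⌉₊ k
  have hs2 : 2 ≤ s := le_min (Nat.lt_ceil.2 (by exact_mod_cast hL)) hk
  have hsL : (s : ℝ) < -log β + 1 :=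
    (Nat.cast_le.2 (min_le_left _ _)).trans_lt (Nat.ceil_lt_add_one (by linarith))
  have hθ0 := holderRate_nonneg hβ.le (by linarith) (C := C) s
  refine ⟨s, by omega, min_le_right _ _, ?_, ?_⟩
  · have := holderRate_sq_le (C := C) hβ hs2 hsL
    exact le_of_pow_le_pow_left₀ two_ne_zero (by norm_num) (by linarith)
  · rcases le_total ⌈-log β⌉₊ k with h | h
    · have hs : s = ⌈-log β⌉₊ := min_eq_left h
      exact holderRate_le_three_mul hβ (by linarith) (by linarith) (by omega)
        (hs ▸ Nat.le_ceil _) (min_le_right _ _)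
    · have hs : s = k := min_eq_right h
      rw [hs] at hθ0 ⊢
      linarith

lemma holderRate_two_mul_sq_le {ε C : ℝ} {k t : ℕ} (hε : 0 ≤ ε) (ht : (t : ℝ) = 2 * k) :
    holderRate (2 * ε) C k ^ 2 ≤ (C * t) ^ 2 * ε ^ ((2 : ℝ) - 4 / t) := by
  have hexp : (1 - 1 / (k : ℝ)) * (2 : ℕ) = 2 - 4 / t := by rw [ht]; push_cast; ring
  have htwo : (2 : ℝ) ^ ((2 : ℝ) - 4 / t) ≤ 4 := by
    calc (2 : ℝ) ^ ((2 : ℝ) - 4 / t) ≤ 2 ^ (2 : ℝ) :=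
          rpow_le_rpow_of_exponent_le (by norm_num) (sub_le_self _ (by positivity))
      _ = 4 := by norm_num
  calc holderRate (2 * ε) C k ^ 2
        = 2 ^ ((2 : ℝ) - 4 / t) * ε ^ ((2 : ℝ) - 4 / t) * (C * k) ^ 2 := by
        rw [holderRate, mul_pow, ← rpow_mul_natCast (by positivity), hexp,
          mul_rpow (by norm_num) hε]
    _ ≤ 4 * ε ^ ((2 : ℝ) - 4 / t) * (C * k) ^ 2 := by gcongr
    _ = (C * t) ^ 2 * ε ^ ((2 : ℝ) - 4 / t) := by rw [ht]; ring

lemma exists_holderRate_sq_le {ε C : ℝ} {t : ℕ} (ht : 4 ≤ t) (hte : Even t) (hC : 1 ≤ C)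
    (hε : 0 < ε) (hCε : C ^ 2 * ε ≤ 1 / 10 ^ 7) :
    ∃ s, 1 ≤ s ∧ s ≤ t / 2 ∧ 2 * ε ≤ holderRate (2 * ε) C s ∧ holderRate (2 * ε) C s ≤ 1 / 100 ∧
      holderRate (2 * ε) C s ^ 2 ≤ 9 * ((C * t) ^ 2 * ε ^ ((2 : ℝ) - 4 / t)) := by
  obtain ⟨k, rfl⟩ := hte
  have hε1 : 2 * ε ≤ 1 := by nlinarith
  obtain ⟨s, hs1, hsk, hθ, hθk⟩ :=
    exists_holderRate_le (by omega : 2 ≤ k) hC (by positivity : 0 < 2 * ε) (by nlinarith)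
  refine ⟨s, hs1, by omega, self_le_holderRate (by positivity) hε1
    (one_le_mul_of_one_le_of_one_le hC (by exact_mod_cast hs1)), hθ, ?_⟩
  calc holderRate (2 * ε) C s ^ 2 ≤ (3 * holderRate (2 * ε) C k) ^ 2 :=
        pow_le_pow_left₀ (holderRate_nonneg (by positivity) (by linarith) s) hθk 2
    _ = 9 * holderRate (2 * ε) C k ^ 2 := by ring
    _ ≤ 9 * ((C * (k + k : ℕ)) ^ 2 * ε ^ ((2 : ℝ) - 4 / (k + k : ℕ))) := by
        gcongr
        exact holderRate_two_mul_sq_le hε.le (by push_cast; ring)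

lemma inv_mul_sum_sq_le_holderRate {n : ℕ} (hn : 0 < n) {B : Finset (Fin n)} (f : Fin n → ℝ)
    {s : ℕ} (hs : 1 ≤ s) {β C V : ℝ} (hβ : 0 ≤ β) (hC : 0 ≤ C) (hV : 0 ≤ V)
    (hB : (#B : ℝ) ≤ β * n)
    (hmom : (n : ℝ)⁻¹ * ∑ i, f i ^ (2 * s) ≤ (C * s) ^ s * V ^ s) :
    (n : ℝ)⁻¹ * ∑ i ∈ B, f i ^ 2 ≤ holderRate β C s * V := by
  obtain ⟨r, rfl⟩ : ∃ r, s = r + 1 := ⟨s - 1, by omega⟩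
  have hn0 : (0 : ℝ) < n := by exact_mod_cast hn
  have hBn : (#B : ℝ) / n ≤ β := by rwa [div_le_iff₀ hn0]
  have hnonneg : ∀ i, 0 ≤ f i ^ (2 * (r + 1)) := fun i => by rw [pow_mul]; positivity
  have hsub : ∑ i ∈ B, f i ^ (2 * (r + 1)) ≤ ∑ i, f i ^ (2 * (r + 1)) :=
    sum_le_sum_of_subset_of_nonneg (subset_univ B) fun i _ _ => hnonneg i
  have hrate : (β ^ (1 - 1 / ((r + 1 : ℕ) : ℝ))) ^ (r + 1) = β ^ r := by
    rw [← rpow_mul_natCast hβ, ← rpow_natCast β r]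
    congr 1
    field_simp
    push_cast
    ring
  have hpow : ((n : ℝ)⁻¹ * ∑ i ∈ B, f i ^ 2) ^ (r + 1) ≤ (holderRate β C (r + 1) * V) ^ (r + 1) :=
    calc ((n : ℝ)⁻¹ * ∑ i ∈ B, f i ^ 2) ^ (r + 1)
        = (n : ℝ)⁻¹ ^ (r + 1) * (∑ i ∈ B, f i ^ 2) ^ (r + 1) := mul_pow _ _ _
      _ ≤ (n : ℝ)⁻¹ ^ (r + 1) * (#B ^ r * ∑ i ∈ B, (f i ^ 2) ^ (r + 1)) := by
        gcongr
        exact pow_sum_le_card_mul_sum_pow (fun i _ => sq_nonneg _) r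
      _ = (#B / n) ^ r * ((n : ℝ)⁻¹ * ∑ i ∈ B, f i ^ (2 * (r + 1))) := by
        simp only [← pow_mul]
        ring
      _ ≤ β ^ r * ((C * (r + 1 : ℕ)) ^ (r + 1) * V ^ (r + 1)) := by
        exact mul_le_mul (pow_le_pow_left₀ (by positivity) hBn r)
          ((mul_le_mul_of_nonneg_left hsub (by positivity)).trans hmom)
          (mul_nonneg (by positivity) (sum_nonneg fun i _ => hnonneg i)) (by positivity)
      _ = (holderRate β C (r + 1) * V) ^ (r + 1) := by
        rw [holderRate, mul_pow, mul_pow, ← hrate]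
        ring
  exact le_of_pow_le_pow_left₀ (by omega) (by unfold holderRate; positivity) hpow

lemma inv_mul_sum_abs_le {n : ℕ} (hn : 0 < n) {B : Finset (Fin n)} (f : Fin n → ℝ) {θ V : ℝ}
    (hθ : 0 ≤ θ) (hV : 0 ≤ V) (hB : (#B : ℝ) ≤ θ * n)
    (hf : (n : ℝ)⁻¹ * ∑ i ∈ B, f i ^ 2 ≤ θ * V) :
    (n : ℝ)⁻¹ * ∑ i ∈ B, |f i| ≤ θ * √V := by
  have hn0 : (0 : ℝ) < n := by exact_mod_cast hn
  have hsq : ((n : ℝ)⁻¹ * ∑ i ∈ B, |f i|) ^ 2 ≤ (θ * √V) ^ 2 :=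
    calc ((n : ℝ)⁻¹ * ∑ i ∈ B, |f i|) ^ 2
        = (n : ℝ)⁻¹ ^ 2 * (∑ i ∈ B, |f i|) ^ 2 := mul_pow _ _ _
      _ ≤ (n : ℝ)⁻¹ ^ 2 * (#B * ∑ i ∈ B, |f i| ^ 2) := by
        gcongr; exact sq_sum_le_card_mul_sum_sq
      _ = (#B / n) * ((n : ℝ)⁻¹ * ∑ i ∈ B, f i ^ 2) := by simp only [sq_abs]; ring
      _ ≤ θ * (θ * V) :=
        mul_le_mul (by rwa [div_le_iff₀ hn0]) hf (by positivity) hθ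
      _ = (θ * √V) ^ 2 := by rw [mul_pow, sq_sqrt hV]; ring
  exact le_of_pow_le_pow_left₀ two_ne_zero (by positivity) hsq

lemma abs_shift_le_of_centered {n : ℕ} (hn : 0 < n) {a b : Fin n → ℝ} {B : Finset (Fin n)} {δ : ℝ}
    (ha : ∑ i, a i = 0) (hb : ∑ i, b i = 0) (hgood : ∀ i ∉ B, a i = b i - δ)
    (hB : (#B : ℝ) ≤ n / 2) :
    |δ| ≤ 2 * ((n : ℝ)⁻¹ * ∑ i ∈ B, |a i| + (n : ℝ)⁻¹ * ∑ i ∈ B, |b i|) := by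
  have hshift : ((n : ℝ) - #B) * δ = ∑ i ∈ B, (a i - b i) := by
    have hcompl : ∑ i ∈ Bᶜ, (a i - b i) = -(((n : ℝ) - #B) * δ) := by
      have hterm : ∀ i ∈ Bᶜ, a i - b i = -δ := fun i hi => by
        rw [hgood i (mem_compl.1 hi)]; ring
      rw [sum_congr rfl hterm, sum_const, card_compl, Fintype.card_fin, nsmul_eq_mul,
        Nat.cast_sub (by simpa using card_le_univ B)]
      ring
    linarith [sum_add_sum_compl B (fun i => a i - b i), sum_sub_distrib (s := univ) a b]
  have hsum : ((n : ℝ) - #B) * |δ| ≤ ∑ i ∈ B, |a i| + ∑ i ∈ B, |b i| := by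
    rw [← abs_of_nonneg (by linarith : (0 : ℝ) ≤ n - #B), ← abs_mul, hshift, ← sum_add_distrib]
    exact (abs_sum_le_sum_abs _ _).trans (sum_le_sum fun i _ => abs_sub _ _)
  have hhalf : (n : ℝ) / 2 * |δ| ≤ ∑ i ∈ B, |a i| + ∑ i ∈ B, |b i| := by
    nlinarith [abs_nonneg δ]
  calc |δ| = 2 / n * ((n : ℝ) / 2 * |δ|) := by field_simp
    _ ≤ 2 / n * (∑ i ∈ B, |a i| + ∑ i ∈ B, |b i|) := by gcongr
    _ = _ := by ring

lemma abs_inv_mul_sum_sq_sub_le {n : ℕ} (hn : 0 < n) {a b : Fin n → ℝ} {B : Finset (Fin n)}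
    {δ : ℝ} (hgood : ∀ i ∉ B, a i = b i - δ) :
    |(n : ℝ)⁻¹ * ∑ i, a i ^ 2 - (n : ℝ)⁻¹ * ∑ i, b i ^ 2| ≤
      (n : ℝ)⁻¹ * ∑ i ∈ B, a i ^ 2 + (n : ℝ)⁻¹ * ∑ i ∈ B, b i ^ 2 +
        (δ ^ 2 + 2 * |δ| * ((n : ℝ)⁻¹ * ∑ i, |b i|)) := by
  have hbad : ∑ i ∈ B, |a i ^ 2 - b i ^ 2| ≤ ∑ i ∈ B, a i ^ 2 + ∑ i ∈ B, b i ^ 2 := by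
    rw [← sum_add_distrib]
    refine sum_le_sum fun i _ => (abs_sub _ _).trans_eq ?_
    rw [abs_sq, abs_sq]
  have hgood' : ∑ i ∈ Bᶜ, |a i ^ 2 - b i ^ 2| ≤ n * δ ^ 2 + 2 * |δ| * ∑ i, |b i| := by
    have hterm : ∀ i ∈ Bᶜ, |a i ^ 2 - b i ^ 2| ≤ δ ^ 2 + 2 * |δ| * |b i| := fun i hi => by
      rw [hgood i (mem_compl.1 hi), show (b i - δ) ^ 2 - b i ^ 2 = δ ^ 2 - 2 * δ * b i by ring]
      refine (abs_sub _ _).trans_eq ?_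
      rw [abs_sq, abs_mul, abs_mul, abs_two]
    calc ∑ i ∈ Bᶜ, |a i ^ 2 - b i ^ 2| ≤ ∑ i ∈ Bᶜ, (δ ^ 2 + 2 * |δ| * |b i|) := sum_le_sum hterm
      _ ≤ ∑ i, (δ ^ 2 + 2 * |δ| * |b i|) :=
        sum_le_sum_of_subset_of_nonneg (subset_univ _) fun i _ _ => by positivity
      _ = n * δ ^ 2 + 2 * |δ| * ∑ i, |b i| := by simp [sum_add_distrib, mul_sum]
  calc |(n : ℝ)⁻¹ * ∑ i, a i ^ 2 - (n : ℝ)⁻¹ * ∑ i, b i ^ 2|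
      = (n : ℝ)⁻¹ * |∑ i, (a i ^ 2 - b i ^ 2)| := by
        rw [← mul_sub, ← sum_sub_distrib, abs_mul, abs_inv, Nat.abs_cast]
    _ ≤ (n : ℝ)⁻¹ * (∑ i ∈ B, |a i ^ 2 - b i ^ 2| + ∑ i ∈ Bᶜ, |a i ^ 2 - b i ^ 2|) := by
        rw [sum_add_sum_compl]
        gcongr
        exact abs_sum_le_sum_abs _ _
    _ ≤ (n : ℝ)⁻¹ * (∑ i ∈ B, a i ^ 2 + ∑ i ∈ B, b i ^ 2 + (n * δ ^ 2 + 2 * |δ| * ∑ i, |b i|)) := by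
        gcongr
    _ = _ := by field_simp

lemma abs_sq_sub_sq_le {θ p q δ : ℝ} (hθ0 : 0 ≤ θ) (hθ : θ ≤ 1 / 100) (hp : 0 ≤ p) (hq : 0 ≤ q)
    (hδ : |δ| ≤ 2 * θ * (p + q))
    (hpq : |p ^ 2 - q ^ 2| ≤ θ * p ^ 2 + θ * q ^ 2 + (δ ^ 2 + 2 * |δ| * q)) :
    |p ^ 2 - q ^ 2| ≤ 24 * θ * q ^ 2 := by
  have hδsq : δ ^ 2 ≤ 4 * θ ^ 2 * (p + q) ^ 2 := by
    rw [← sq_abs]; nlinarith [abs_nonneg δ]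
  have hX : |p ^ 2 - q ^ 2| ≤
      θ * p ^ 2 + θ * q ^ 2 + 4 * θ * (p + q) * q + 4 * θ ^ 2 * (p + q) ^ 2 := by
    nlinarith [mul_le_mul_of_nonneg_right hδ hq]
  have hp2 : p ^ 2 ≤ 2 * q ^ 2 := by
    nlinarith [le_abs_self (p ^ 2 - q ^ 2), sq_nonneg (p - q), sq_nonneg (p + q),
      mul_nonneg hθ0 (sq_nonneg (p + q)), mul_nonneg (mul_nonneg hθ0 hθ0) (sq_nonneg (p + q)),
      mul_nonneg hp hq]
  nlinarith [sq_nonneg (p - q), sq_nonneg (p + q), mul_nonneg hθ0 (sq_nonneg (p - q)),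
    mul_nonneg (mul_nonneg hθ0 hθ0) (sq_nonneg (p + q)), mul_nonneg hp hq,
    mul_nonneg hθ0 (mul_nonneg hp hq), sq_nonneg q, mul_nonneg hθ0 (sq_nonneg q)]

theorem abs_variance_sub_le {n : ℕ} (hn : 0 < n) {a b : Fin n → ℝ} {B : Finset (Fin n)}
    {δ θ : ℝ} (ha : ∑ i, a i = 0) (hb : ∑ i, b i = 0) (hgood : ∀ i ∉ B, a i = b i - δ)
    (hθ0 : 0 ≤ θ) (hθ : θ ≤ 1 / 100) (hB : (#B : ℝ) ≤ θ * n)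
    (haB : (n : ℝ)⁻¹ * ∑ i ∈ B, a i ^ 2 ≤ θ * ((n : ℝ)⁻¹ * ∑ i, a i ^ 2))
    (hbB : (n : ℝ)⁻¹ * ∑ i ∈ B, b i ^ 2 ≤ θ * ((n : ℝ)⁻¹ * ∑ i, b i ^ 2)) :
    |(n : ℝ)⁻¹ * ∑ i, a i ^ 2 - (n : ℝ)⁻¹ * ∑ i, b i ^ 2| ≤
      24 * θ * ((n : ℝ)⁻¹ * ∑ i, b i ^ 2) := by
  set V := (n : ℝ)⁻¹ * ∑ i, a i ^ 2
  set W := (n : ℝ)⁻¹ * ∑ i, b i ^ 2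
  have hV : 0 ≤ V := by positivity
  have hW : 0 ≤ W := by positivity
  have hδ : |δ| ≤ 2 * θ * (√V + √W) := by
    have := abs_shift_le_of_centered hn ha hb hgood (by nlinarith)
    linarith [inv_mul_sum_abs_le hn a hθ0 hV hB haB, inv_mul_sum_abs_le hn b hθ0 hW hB hbB]
  have hb1 : (n : ℝ)⁻¹ * ∑ i, |b i| ≤ √W := by
    simpa using inv_mul_sum_abs_le hn b zero_le_one hW (by simp) (by simp [W])
  have hdecomp : |√V ^ 2 - √W ^ 2| ≤ θ * √V ^ 2 + θ * √W ^ 2 + (δ ^ 2 + 2 * |δ| * √W) := by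
    rw [sq_sqrt hV, sq_sqrt hW]
    exact (abs_inv_mul_sum_sq_sub_le hn hgood).trans (by gcongr)
  simpa only [sq_sqrt hV, sq_sqrt hW] using
    abs_sq_sub_sq_le hθ0 hθ (sqrt_nonneg _) (sqrt_nonneg _) hδ hdecomp

lemma card_filter_ne_le {n : ℕ} {E : Type*} [DecidableEq E] {x xstar y : Fin n → E}
    {w : Fin n → ℝ} {ε : ℝ} (hw : ∀ i, w i = 0 ∨ w i = 1) (hwsum : (1 - ε) * n ≤ ∑ i, w i)
    (hyx : ∀ i, w i = 1 → y i = x i) (hy : (#{i | y i ≠ xstar i} : ℝ) ≤ ε * n) :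
    (#{i | x i ≠ xstar i} : ℝ) ≤ 2 * ε * n := by
  have hsub : ({i | x i ≠ xstar i} : Finset (Fin n)) ⊆
      ({i | y i ≠ xstar i} : Finset (Fin n)) ∪ ({i | w i ≠ 1} : Finset (Fin n)) := by
    intro i
    simp only [mem_filter, mem_univ, true_and, mem_union]
    intro hx
    by_cases h : w i = 1
    · exact Or.inl (hyx i h ▸ hx)
    · exact Or.inr h
  have hwcard : ∑ i, w i = #{i | w i = 1} := by
    rw [← sum_boole]
    exact sum_congr rfl fun i _ => by rcases hw i with h | h <;> simp [h]
  have hsplit : (#{i | w i = 1} : ℝ) + #{i | w i ≠ 1} = n := by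
    exact_mod_cast (card_filter_add_card_filter_not _).trans (card_fin n)
  have hunion : (#{i | x i ≠ xstar i} : ℝ) ≤ #{i | y i ≠ xstar i} + #{i | w i ≠ 1} := by
    exact_mod_cast (card_le_card hsub).trans (card_union_le _ _)
  linarith

lemma sum_inner_sub_eq_zero {E : Type*} [NormedAddCommGroup E] [InnerProductSpace ℝ E] {n : ℕ}
    (hn : 0 < n) {x : Fin n → E} {μ : E} (hμ : μ = (n : ℝ)⁻¹ • ∑ i, x i) (u : E) :
    ∑ i, inner ℝ u (x i - μ) = 0 := by
  rw [← inner_sum, sum_sub_distrib, sum_const, card_univ, Fintype.card_fin, hμ,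
    ← Nat.cast_smul_eq_nsmul ℝ, smul_smul, mul_inv_cancel₀ (by positivity), one_smul, sub_self,
    inner_zero_right]

theorem abs_inv_mul_sum_inner_sq_sub_le {E : Type*} [NormedAddCommGroup E]
    [InnerProductSpace ℝ E] {n : ℕ} (hn : 0 < n) {x xstar : Fin n → E} {μ μstar : E}
    (hμ : μ = (n : ℝ)⁻¹ • ∑ i, x i) (hμstar : μstar = (n : ℝ)⁻¹ • ∑ i, xstar i) (u : E)
    {B : Finset (Fin n)} (hxB : ∀ i ∉ B, x i = xstar i) {θ : ℝ} (hθ0 : 0 ≤ θ)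
    (hθ : θ ≤ 1 / 100) (hB : (#B : ℝ) ≤ θ * n)
    (hxbad : (n : ℝ)⁻¹ * ∑ i ∈ B, inner ℝ u (x i - μ) ^ 2 ≤
      θ * ((n : ℝ)⁻¹ * ∑ i, inner ℝ u (x i - μ) ^ 2))
    (hxstarbad : (n : ℝ)⁻¹ * ∑ i ∈ B, inner ℝ u (xstar i - μstar) ^ 2 ≤
      θ * ((n : ℝ)⁻¹ * ∑ i, inner ℝ u (xstar i - μstar) ^ 2)) :
    |(n : ℝ)⁻¹ * ∑ i, inner ℝ u (x i - μ) ^ 2 - (n : ℝ)⁻¹ * ∑ i, inner ℝ u (xstar i - μstar) ^ 2|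
      ≤ 24 * θ * ((n : ℝ)⁻¹ * ∑ i, inner ℝ u (xstar i - μstar) ^ 2) := by
  have hgood : ∀ i ∉ B,
      inner ℝ u (x i - μ) = inner ℝ u (xstar i - μstar) - inner ℝ u (μ - μstar) := fun i hi => by
    rw [hxB i hi, ← inner_sub_right, sub_sub_sub_cancel_right]
  exact abs_variance_sub_le hn (sum_inner_sub_eq_zero hn hμ u) (sum_inner_sub_eq_zero hn hμstar u)
    hgood hθ0 hθ hB hxbad hxstarbad

open Classical in
/-- Robust covariance estimation: under certifiable subgaussianity, in an ε-corruption
setup, `(Q u − Q* u)² ≤ K·(C t)²·ε^{2−4/t}·Q*(u)²` for absolute constants `K, c₀`. -/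
theorem stmt_7 :
    ∃ K c0 : ℝ, 0 < K ∧ 0 < c0 ∧
      ∀ (t : ℕ), 4 ≤ t → Even t →
      ∀ C ε : ℝ, 0 < C → 0 < ε → ε < 1 → C ^ 2 * ε ≤ c0 →
      ∀ (n d : ℕ), 0 < n → 0 < d →
      ∀ (xstar y x : Fin n → EuclideanSpace ℝ (Fin d)) (w : Fin n → ℝ),
      (∀ i, w i = 0 ∨ w i = 1) →
      ((1 - ε) * n ≤ ∑ i, w i) →
      (∀ i, w i • (y i - x i) = 0) →
      (((Finset.univ.filter fun i => y i ≠ xstar i).card : ℝ) ≤ ε * n) →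
      ∀ (μ μstar : EuclideanSpace ℝ (Fin d)),
      μ = (n : ℝ)⁻¹ • ∑ i, x i →
      μstar = (n : ℝ)⁻¹ • ∑ i, xstar i →
      ∀ (Q Qstar : EuclideanSpace ℝ (Fin d) → ℝ),
      (∀ u, Q u = (n : ℝ)⁻¹ * ∑ i, (inner ℝ u (x i - μ) : ℝ) ^ 2) →
      (∀ u, Qstar u = (n : ℝ)⁻¹ * ∑ i, (inner ℝ u (xstar i - μstar) : ℝ) ^ 2) →
      (∀ t' : ℕ, 1 ≤ t' → t' ≤ t / 2 → ∀ u,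
        (n : ℝ)⁻¹ * ∑ i, (inner ℝ u (x i - μ) : ℝ) ^ (2 * t')
          ≤ (C * t') ^ t' * (Q u) ^ t') →
      (∀ t' : ℕ, 1 ≤ t' → t' ≤ t / 2 → ∀ u,
        (n : ℝ)⁻¹ * ∑ i, (inner ℝ u (xstar i - μstar) : ℝ) ^ (2 * t')
          ≤ (C * t') ^ t' * (Qstar u) ^ t') →
      ∀ u : EuclideanSpace ℝ (Fin d),
        (Q u - Qstar u) ^ 2
          ≤ K * (C * t) ^ 2 * ε ^ ((2 : ℝ) - 4 / t) * (Qstar u) ^ 2 := by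
  refine ⟨5184, 1 / 10 ^ 7, by norm_num, by norm_num, ?_⟩
  intro t ht hte C ε hC hε _ hCε n d hn _ xstar y x w hw hwsum hwxy hy μ μstar hμ hμstar
    Q Qstar hQ hQstar hmom hmomstar u
  have hQ0 : 0 ≤ Q u := by rw [hQ]; positivity
  have hQs0 : 0 ≤ Qstar u := by rw [hQstar]; positivity
  rcases lt_or_ge C 1 with hC1 | hC1
  · -- the case t' = 1 of the moment bounds reads Q u ≤ C * Q u
    have h1 := hmom 1 le_rfl (by omega) u
    have h2 := hmomstar 1 le_rfl (by omega) u
    simp only [Nat.cast_one, mul_one, pow_one, ← hQ, ← hQstar] at h1 h2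
    have hQu : Q u = 0 := by nlinarith
    have hQsu : Qstar u = 0 := by nlinarith
    simp [hQu, hQsu]
  obtain ⟨s, hs1, hst, hεθ, hθ, hθt⟩ := exists_holderRate_sq_le ht hte hC1 hε hCε
  set θ := holderRate (2 * ε) C s
  have hB : (#{i | x i ≠ xstar i} : ℝ) ≤ 2 * ε * n :=
    card_filter_ne_le hw hwsum (fun i h => by simpa [h, sub_eq_zero] using hwxy i) hy
  have hbad := inv_mul_sum_sq_le_holderRate hn _ hs1 (by positivity) hC.le hQ0 hB (hmom s hs1 hst u)
  have hbadstar :=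
    inv_mul_sum_sq_le_holderRate hn _ hs1 (by positivity) hC.le hQs0 hB (hmomstar s hs1 hst u)
  rw [hQ] at hbad
  rw [hQstar] at hbadstar
  have hdiff : |Q u - Qstar u| ≤ 24 * θ * Qstar u := by
    rw [hQ, hQstar]
    exact abs_inv_mul_sum_inner_sq_sub_le hn hμ hμstar u (fun i hi => by simpa using hi)
      (by linarith) hθ (hB.trans (by gcongr)) hbad hbadstar
  calc (Q u - Qstar u) ^ 2 = |Q u - Qstar u| ^ 2 := (sq_abs _).symm
    _ ≤ (24 * θ * Qstar u) ^ 2 := pow_le_pow_left₀ (abs_nonneg _) hdiff 2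
    _ = 576 * θ ^ 2 * Qstar u ^ 2 := by ring
    _ ≤ 576 * (9 * ((C * t) ^ 2 * ε ^ ((2 : ℝ) - 4 / t))) * Qstar u ^ 2 := by gcongr
    _ = _ := by ring
end

section
/- There exists an absolute constant c > 0 such that for every integer k ≥ 2 the following holds. Set λ = √(log k / 3). Let J be a random variable uniformly distributed on {1, …, k}, and conditionally on J = i let Z be distributed according to N(λ e_i, I_k), the Gaussian measure on ℝ^k with mean λ e_i and identity covariance. Then for every measurable function Ψ : ℝ^k → {1, …, k}, P(Ψ(Z) ≠ J) ≥ c. -/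
/-!
Let `P_i = N(λ e_i, I_k)` and `P_0 = N(0, I_k)`. The likelihood ratio `dP_i/dP_0` is
`L_i(z) = exp(λ z_i - λ²/2)`, so for any estimator `Ψ`,
`∑ᵢ P_i(Ψ = i) = E_0[L_Ψ] ≤ (E_0[L_Ψ²])^{1/2} ≤ (∑ᵢ E_0[L_i²])^{1/2} = (k e^{λ²})^{1/2} = k^{2/3}`
by Cauchy–Schwarz. Hence `Ψ` is correct with probability at most `k^{-1/3} ≤ 2^{-1/3} < 4/5`.
-/

open MeasureTheory ProbabilityTheory
open scoped ENNReal

/-- The standard Gaussian measure on `ℝ^k` (product of standard one-dimensional Gaussians). -/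
noncomputable def stdGaussianPi (k : ℕ) : Measure (Fin k → ℝ) :=
  Measure.pi fun _ => gaussianReal 0 1

/-- `N(m, I_k)`: the Gaussian measure on `ℝ^k` with mean `m` and identity covariance,
i.e. the pushforward of the standard Gaussian under translation by `m`. -/
noncomputable def gaussianPi (k : ℕ) (m : Fin k → ℝ) : Measure (Fin k → ℝ) :=
  (stdGaussianPi k).map (fun z => z + m)

/-- The `i`-th standard basis vector of `ℝ^k`, scaled by `lam`. -/
noncomputable def scaledBasis (k : ℕ) (lam : ℝ) (i : Fin k) : Fin k → ℝ :=
  fun j => if j = i then lam else 0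

/-- The joint law of `(J, Z)` where `J` is uniform on `{1,…,k}` and, given `J = i`,
`Z ∼ N(λ e_i, I_k)`. -/
noncomputable def jointLaw (k : ℕ) (lam : ℝ) : Measure (Fin k × (Fin k → ℝ)) :=
  (k : ℝ≥0∞)⁻¹ • ∑ i : Fin k,
    (Measure.dirac i).prod (gaussianPi k (scaledBasis k lam i))

lemma sq_lintegral_le_lintegral_sq {α : Type*} [MeasurableSpace α] {μ : Measure α}
    [IsProbabilityMeasure μ] {g : α → ℝ≥0∞} (hg : AEMeasurable g μ) :
    (∫⁻ x, g x ∂μ) ^ 2 ≤ ∫⁻ x, g x ^ 2 ∂μ := by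
  have h := ENNReal.lintegral_mul_norm_pow_le (hg.pow_const 2) (aemeasurable_const (b := 1))
    (p := 1 / 2) (q := 1 / 2) (by norm_num) (by norm_num) (by norm_num)
  have hsqrt : ∀ x, (g x ^ 2) ^ (1 / 2 : ℝ) = g x := fun x => by
    rw [← ENNReal.rpow_natCast, ← ENNReal.rpow_mul]; norm_num
  simp only [hsqrt, ENNReal.one_rpow, mul_one, lintegral_const, measure_univ] at h
  calc (∫⁻ x, g x ∂μ) ^ 2 ≤ ((∫⁻ x, g x ^ 2 ∂μ) ^ (1 / 2 : ℝ)) ^ 2 := by gcongr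
    _ = ∫⁻ x, g x ^ 2 ∂μ := by
      rw [← ENNReal.rpow_natCast, ← ENNReal.rpow_mul]; norm_num

lemma sq_sum_setLIntegral_fiber_le {α ι : Type*} [MeasurableSpace α] [Fintype ι]
    [MeasurableSpace ι] [MeasurableSingletonClass ι] {μ : Measure α} [IsProbabilityMeasure μ]
    {Ψ : α → ι} (hΨ : Measurable Ψ) {f : ι → α → ℝ≥0∞} (hf : ∀ i, Measurable (f i)) :
    (∑ i, ∫⁻ x in Ψ ⁻¹' {i}, f i x ∂μ) ^ 2 ≤ ∑ i, ∫⁻ x, f i x ^ 2 ∂μ := by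
  have hfΨ : Measurable fun x => f (Ψ x) x :=
    (measurable_from_prod_countable_left (f := fun p : α × ι => f p.2 p.1) hf).comp
      (measurable_id.prodMk hΨ)
  have hfibers : ∑ i, ∫⁻ x in Ψ ⁻¹' {i}, f i x ∂μ = ∫⁻ x, f (Ψ x) x ∂μ := by
    have hcover : (⋃ i, Ψ ⁻¹' {i}) = Set.univ := by
      rw [← Set.preimage_iUnion, Set.iUnion_of_singleton, Set.preimage_univ]
    rw [← setLIntegral_univ, ← hcover, lintegral_iUnion (fun i => hΨ (measurableSet_singleton i))
      (pairwise_disjoint_fiber Ψ), tsum_fintype]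
    refine Finset.sum_congr rfl fun i _ =>
      setLIntegral_congr_fun (hΨ (measurableSet_singleton i)) fun x hx => ?_
    rw [Set.mem_preimage, Set.mem_singleton_iff] at hx
    simp only [hx]
  calc (∑ i, ∫⁻ x in Ψ ⁻¹' {i}, f i x ∂μ) ^ 2 = (∫⁻ x, f (Ψ x) x ∂μ) ^ 2 := by rw [hfibers]
    _ ≤ ∫⁻ x, f (Ψ x) x ^ 2 ∂μ := sq_lintegral_le_lintegral_sq hfΨ.aemeasurable
    _ ≤ ∫⁻ x, ∑ i, f i x ^ 2 ∂μ :=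
      lintegral_mono fun x => Finset.single_le_sum (f := fun i => f i x ^ 2)
        (fun _ _ => zero_le) (Finset.mem_univ (Ψ x))
    _ = ∑ i, ∫⁻ x, f i x ^ 2 ∂μ := lintegral_finsetSum _ fun i _ => (hf i).pow_const 2

lemma MeasureTheory.Measure.pi_withDensity {ι : Type*} [Fintype ι] {α : ι → Type*}
    [∀ i, MeasurableSpace (α i)] (μ : ∀ i, Measure (α i)) [∀ i, IsProbabilityMeasure (μ i)]
    {f : ∀ i, α i → ℝ≥0∞} (hf : ∀ i, Measurable (f i))
    [∀ i, SigmaFinite ((μ i).withDensity (f i))] :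
    Measure.pi (fun i => (μ i).withDensity (f i))
      = (Measure.pi μ).withDensity (fun x => ∏ i, f i (x i)) := by
  refine Measure.pi_eq fun s hs => ?_
  have hbox : (Set.univ.pi s).indicator (fun x => ∏ i, f i (x i))
      = fun x => ∏ i, (s i).indicator (f i) (x i) := by
    ext x
    by_cases hx : x ∈ Set.univ.pi s
    · rw [Set.indicator_of_mem hx]
      exact Finset.prod_congr rfl fun i _ => (Set.indicator_of_mem (hx i (Set.mem_univ i)) _).symm
    · obtain ⟨i, -, hi⟩ := not_forall₂.mp hx
      rw [Set.indicator_of_notMem hx, eq_comm]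
      exact Finset.prod_eq_zero (Finset.mem_univ i) (Set.indicator_of_notMem hi _)
  rw [withDensity_apply _ (MeasurableSet.univ_pi hs),
    ← lintegral_indicator (MeasurableSet.univ_pi hs), hbox,
    lintegral_prod_eq_prod_lintegral_of_indepFun _ _
      (iIndepFun_pi fun i => ((hf i).indicator (hs i)).aemeasurable)
      fun i => ((hf i).indicator (hs i)).comp (measurable_pi_apply i)]
  refine Finset.prod_congr rfl fun i _ => ?_
  rw [withDensity_apply _ (hs i), ← lintegral_indicator (hs i)]
  exact (measurePreserving_eval μ i).lintegral_comp ((hf i).indicator (hs i))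

open Real

noncomputable def gaussianLR (c x : ℝ) : ℝ≥0∞ := ENNReal.ofReal (exp (c * x - c ^ 2 / 2))

lemma measurable_gaussianLR (c : ℝ) : Measurable (gaussianLR c) := by
  unfold gaussianLR; fun_prop

lemma gaussianLR_zero : gaussianLR 0 = 1 := by
  ext x; simp [gaussianLR]

lemma gaussianLR_sq (c x : ℝ) :
    gaussianLR c x ^ 2 = ENNReal.ofReal (exp (c ^ 2)) * gaussianLR (2 * c) x := by
  simp only [gaussianLR, sq, ← ENNReal.ofReal_mul (exp_nonneg _), ← exp_add]
  ring_nf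

lemma gaussianReal_eq_withDensity_gaussianLR (c : ℝ) :
    gaussianReal c 1 = (gaussianReal 0 1).withDensity (gaussianLR c) := by
  rw [gaussianReal_of_var_ne_zero _ one_ne_zero, gaussianReal_of_var_ne_zero _ one_ne_zero,
    ← withDensity_mul _ (measurable_gaussianPDF 0 1) (measurable_gaussianLR c)]
  congr 1
  funext x
  simp only [Pi.mul_apply, gaussianPDF, gaussianLR]
  rw [← ENNReal.ofReal_mul (gaussianPDFReal_pos _ _ _ one_ne_zero).le]
  simp only [gaussianPDFReal, NNReal.coe_one, mul_one, sub_zero, mul_assoc, ← exp_add]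
  ring_nf

lemma lintegral_gaussianLR (c : ℝ) : ∫⁻ x, gaussianLR c x ∂gaussianReal 0 1 = 1 := by
  rw [← setLIntegral_univ, ← withDensity_apply _ MeasurableSet.univ,
    ← gaussianReal_eq_withDensity_gaussianLR, measure_univ]

lemma lintegral_gaussianLR_sq (c : ℝ) :
    ∫⁻ x, gaussianLR c x ^ 2 ∂gaussianReal 0 1 = ENNReal.ofReal (exp (c ^ 2)) := by
  simp_rw [gaussianLR_sq]
  rw [lintegral_const_mul _ (measurable_gaussianLR _), lintegral_gaussianLR, mul_one]

instance isProbabilityMeasure_stdGaussianPi (k : ℕ) :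
    IsProbabilityMeasure (stdGaussianPi k) := by
  unfold stdGaussianPi; infer_instance

instance isProbabilityMeasure_gaussianPi (k : ℕ) (m : Fin k → ℝ) :
    IsProbabilityMeasure (gaussianPi k m) :=
  Measure.isProbabilityMeasure_map (measurable_add_const m).aemeasurable

lemma gaussianPi_eq_pi (k : ℕ) (m : Fin k → ℝ) :
    gaussianPi k m = Measure.pi fun j => gaussianReal (m j) 1 :=
  (measurePreserving_pi _ _ fun j => ⟨measurable_add_const _, by
    simpa using gaussianReal_map_add_const (μ := 0) (v := 1) (m j)⟩).map_eq

lemma gaussianPi_eq_withDensity (k : ℕ) (m : Fin k → ℝ) :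
    gaussianPi k m = (stdGaussianPi k).withDensity fun z => ∏ j, gaussianLR (m j) (z j) := by
  have : ∀ j, SigmaFinite ((gaussianReal 0 1).withDensity (gaussianLR (m j))) := fun j => by
    rw [← gaussianReal_eq_withDensity_gaussianLR]; infer_instance
  simp_rw [gaussianPi_eq_pi, gaussianReal_eq_withDensity_gaussianLR (m _)]
  exact Measure.pi_withDensity _ fun j => measurable_gaussianLR (m j)

lemma gaussianPi_scaledBasis (k : ℕ) (lam : ℝ) (i : Fin k) :
    gaussianPi k (scaledBasis k lam i)
      = (stdGaussianPi k).withDensity fun z => gaussianLR lam (z i) := by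
  rw [gaussianPi_eq_withDensity]
  congr with z
  rw [Finset.prod_eq_single i (fun j _ hj => by simp [scaledBasis, hj, gaussianLR_zero])
    (by simp)]
  simp [scaledBasis]

lemma sq_sum_gaussianPi_scaledBasis_fiber_le (k : ℕ) (lam : ℝ) {Ψ : (Fin k → ℝ) → Fin k}
    (hΨ : Measurable Ψ) :
    (∑ i, gaussianPi k (scaledBasis k lam i) (Ψ ⁻¹' {i})) ^ 2
      ≤ k * ENNReal.ofReal (exp (lam ^ 2)) := by
  have hLR : ∀ i : Fin k, Measurable fun z : Fin k → ℝ => gaussianLR lam (z i) :=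
    fun i => (measurable_gaussianLR lam).comp (measurable_pi_apply i)
  have hsecond : ∀ i : Fin k,
      ∫⁻ z, gaussianLR lam (z i) ^ 2 ∂stdGaussianPi k = ENNReal.ofReal (exp (lam ^ 2)) :=
    fun i => ((measurePreserving_eval (fun _ => gaussianReal 0 1) i).lintegral_comp
      (f := fun x => gaussianLR lam x ^ 2) ((measurable_gaussianLR lam).pow_const 2)).trans
        (lintegral_gaussianLR_sq lam)
  simp_rw [gaussianPi_scaledBasis, withDensity_apply _ (hΨ (measurableSet_singleton _))]
  refine (sq_sum_setLIntegral_fiber_le hΨ hLR).trans_eq ?_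
  simp [hsecond]

lemma isProbabilityMeasure_jointLaw {k : ℕ} (hk : k ≠ 0) (lam : ℝ) :
    IsProbabilityMeasure (jointLaw k lam) := by
  constructor
  simp [jointLaw, ENNReal.inv_mul_cancel (Nat.cast_ne_zero.mpr hk) (ENNReal.natCast_ne_top k)]

lemma jointLaw_setOf_ne {k : ℕ} (hk : k ≠ 0) (lam : ℝ) {Ψ : (Fin k → ℝ) → Fin k}
    (hΨ : Measurable Ψ) :
    jointLaw k lam {p | Ψ p.2 ≠ p.1}
      = 1 - (k : ℝ≥0∞)⁻¹ * ∑ i, gaussianPi k (scaledBasis k lam i) (Ψ ⁻¹' {i}) := by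
  have := isProbabilityMeasure_jointLaw hk lam
  have hcorrect : MeasurableSet {p : Fin k × (Fin k → ℝ) | Ψ p.2 = p.1} :=
    measurableSet_eq_fun (hΨ.comp measurable_snd) measurable_fst
  rw [← Set.compl_ofPred, prob_compl_eq_one_sub hcorrect]
  simp only [jointLaw, Measure.smul_apply, smul_eq_mul, Measure.finsetSum_apply,
    Measure.dirac_prod, Measure.map_apply measurable_prodMk_left hcorrect]
  rfl

lemma ofReal_one_fifth_le_one_sub {k : ℕ} (hk : 2 ≤ k) {S : ℝ≥0∞}
    (hS : S ^ 2 ≤ k * ENNReal.ofReal (exp (log k / 3))) :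
    ENNReal.ofReal (1 / 5) ≤ 1 - (k : ℝ≥0∞)⁻¹ * S := by
  have hk2 : (2 : ℝ) ≤ k := by exact_mod_cast hk
  set t := exp (log k / 3) with ht
  have ht0 : 0 < t := exp_pos _
  have ht3 : t ^ 3 = k := by
    rw [ht, ← exp_nat_mul, show ((3 : ℕ) : ℝ) * (log k / 3) = log k by push_cast; ring,
      exp_log (by linarith)]
  have hS_top : S ≠ ⊤ := by
    rintro rfl
    simp [ENNReal.mul_eq_top] at hS
  set s := S.toReal
  have hs : s ^ 2 ≤ t ^ 4 := by
    have := ENNReal.toReal_mono (by finiteness) hS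
    rw [ENNReal.toReal_pow, ENNReal.toReal_mul, ENNReal.toReal_ofReal ht0.le,
      ENNReal.toReal_natCast, ← ht3] at this
    linarith
  -- `s / k ≤ t ^ 2 / t ^ 3 = 1 / t`, and `t ^ 3 ≥ 2` gives `t ≥ 5 / 4`.
  have ht54 : 5 / 4 ≤ t := by nlinarith [sq_nonneg (t - 5 / 4)]
  have hst : s ≤ t ^ 2 := by nlinarith [sq_nonneg t]
  have hsk : s / k ≤ 4 / 5 := by
    rw [div_le_iff₀ (by linarith), ← ht3]
    nlinarith
  have hkS : (k : ℝ≥0∞)⁻¹ * S = ENNReal.ofReal (s / k) := by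
    rw [div_eq_inv_mul, ENNReal.ofReal_mul (by positivity),
      ENNReal.ofReal_inv_of_pos (by linarith), ENNReal.ofReal_natCast, ENNReal.ofReal_toReal hS_top]
  rw [hkS]
  refine ENNReal.le_sub_of_add_le_right ENNReal.ofReal_ne_top ?_
  rw [← ENNReal.ofReal_add (by norm_num) (by positivity), ← ENNReal.ofReal_one]
  exact ENNReal.ofReal_le_ofReal (by linarith)

/-- Lower bound for Gaussian hypothesis testing: with `λ = √(log k / 3)`, every
(measurable) estimator `Ψ` of the component index fails with probability at least
an absolute constant `c > 0`. -/
theorem stmt_9 :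
    ∃ c : ℝ, 0 < c ∧ ∀ k : ℕ, 2 ≤ k →
      ∀ Ψ : (Fin k → ℝ) → Fin k, Measurable Ψ →
        ENNReal.ofReal c
          ≤ jointLaw k (Real.sqrt (Real.log k / 3)) {p | Ψ p.2 ≠ p.1} := by
  refine ⟨1 / 5, by norm_num, fun k hk Ψ hΨ => ?_⟩
  have hsum := sq_sum_gaussianPi_scaledBasis_fiber_le k (sqrt (log k / 3)) hΨ
  rw [sq_sqrt (div_nonneg (log_natCast_nonneg k) (by norm_num))] at hsum
  rw [jointLaw_setOf_ne (by omega) _ hΨ]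
  exact ofReal_one_fifth_le_one_sub hk hsum
end

section
/- For every real γ > 0 and every integer t ≥ 1 there exist sum-of-squares polynomials σ_0, σ_1 ∈ ℝ[X], with deg σ_0 ≤ t and deg(σ_1 · X) ≤ t, such that, as an identity of polynomials in ℝ[X], (γ^{t−1}·X^t + (t−1)/γ)/t − X = σ_0 + σ_1 · X. Consequently, as an identity in ℝ[A, X], (γ^{t−1}·A·X^t + (t−1)·A/γ)/t − A·X = σ_0 · A + σ_1 · (A·X), giving a degree-(t+1) sum-of-squares certificate that any reals A ≥ 0, X ≥ 0 satisfy A·X ≤ (γ^{t−1}·A·X^t + (t−1)·A/γ)/t. -/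
open Polynomial Finset

def IsSOS (p : Polynomial ℝ) : Prop :=
  ∃ (k : ℕ) (r : Fin k → Polynomial ℝ), p = ∑ i, r i ^ 2

noncomputable def liftX (p : Polynomial ℝ) : MvPolynomial (Fin 2) ℝ :=
  Polynomial.aeval (MvPolynomial.X 1) p

lemma sum_even_odd {M : Type*} [AddCommMonoid M] (f : ℕ → M) (n : ℕ) :
    ∑ j ∈ range (2*n), f j = ∑ m ∈ range n, (f (2*m) + f (2*m+1)) := by
  induction n with
  | zero => simp
  | succ n ih =>
    have : 2 * (n+1) = (2*n + 1) + 1 := by ring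
    rw [this, Finset.sum_range_succ, Finset.sum_range_succ, ih, Finset.sum_range_succ,
      add_assoc]

lemma key_sum (y : ℝ) (n : ℕ) :
    (y-1)^2 * ∑ j ∈ range n, ((n - j : ℕ):ℝ) * y^j = y^(n+1) - ((n:ℝ)+1)*y + n := by
  induction n with
  | zero => simp
  | succ n ih =>
    have h1 : ∑ j ∈ range (n+1), (((n+1) - j : ℕ):ℝ) * y^j
        = (∑ j ∈ range n, ((n - j : ℕ):ℝ) * y^j) + ∑ j ∈ range (n+1), y^j := by
      have hc : ∀ j ∈ range (n+1), (((n+1)-j:ℕ):ℝ)*y^j = ((n-j:ℕ):ℝ)*y^j + y^j := by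
        intro j hj
        have hj' : j ≤ n := Nat.lt_succ_iff.mp (mem_range.mp hj)
        have he : (n+1)-j = (n-j)+1 := by omega
        rw [he]; push_cast; ring
      rw [Finset.sum_congr rfl hc, Finset.sum_add_distrib,
        Finset.sum_range_succ (fun j => ((n-j:ℕ):ℝ)*y^j)]
      simp
    rw [h1, mul_add, ih]
    have hg := geom_sum_mul y (n+1)
    push_cast
    linear_combination (y-1) * hg

lemma main_real (γ : ℝ) (hγ : 0 < γ) (n : ℕ) (x : ℝ) :
    (∑ m ∈ range n,
        (Real.sqrt (((n - 2*m : ℕ):ℝ) * γ^(2*m) / (((n:ℝ)+1)*γ)) * ((γ*x-1)*x^m))^2)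
      + (∑ m ∈ range n,
        (Real.sqrt (((n - (2*m+1) : ℕ):ℝ) * γ^(2*m) / ((n:ℝ)+1)) * ((γ*x-1)*x^m))^2) * x
      = (1/((n:ℝ)+1)) * (γ^n * x^(n+1) + (n:ℝ)/γ) - x := by
  have hγ' : γ ≠ 0 := ne_of_gt hγ
  have hn1 : ((n:ℝ)+1) ≠ 0 := by positivity
  set g : ℕ → ℝ := fun j => ((n - j : ℕ):ℝ) * (γ*x)^j * (γ*x-1)^2 / (((n:ℝ)+1)*γ) with hg
  have h0 : ∀ m, (Real.sqrt (((n - 2*m : ℕ):ℝ) * γ^(2*m) / (((n:ℝ)+1)*γ)) * ((γ*x-1)*x^m))^2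
      = g (2*m) := by
    intro m
    rw [mul_pow, Real.sq_sqrt (by positivity)]
    simp only [hg]
    field_simp
    ring
  have h1 : ∀ m, (Real.sqrt (((n - (2*m+1) : ℕ):ℝ) * γ^(2*m) / ((n:ℝ)+1)) * ((γ*x-1)*x^m))^2 * x
      = g (2*m+1) := by
    intro m
    rw [mul_pow, Real.sq_sqrt (by positivity)]
    simp only [hg]
    field_simp
    ring
  rw [Finset.sum_mul]
  simp only [fun m => h0 m]
  conv_lhs => rw [show (∑ m ∈ range n, g (2*m)) + ∑ m ∈ range n,
      (Real.sqrt (((n - (2*m+1) : ℕ):ℝ) * γ^(2*m) / ((n:ℝ)+1)) * ((γ*x-1)*x^m))^2 * x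
    = ∑ m ∈ range n, (g (2*m) + g (2*m+1)) by
      rw [← Finset.sum_add_distrib]; exact Finset.sum_congr rfl fun m _ => by rw [h1 m]]
  rw [← sum_even_odd g n]
  have hext : ∑ j ∈ range (2*n), g j = ∑ j ∈ range n, g j := by
    symm
    apply Finset.sum_subset (Finset.range_subset_range.mpr (by omega))
    intro j _ hj
    have hjn : n ≤ j := le_of_not_gt (fun h => hj (Finset.mem_range.mpr h))
    simp [hg, Nat.sub_eq_zero_of_le hjn]
  rw [hext]
  have hS : ∑ j ∈ range n, g j
      = (∑ j ∈ range n, ((n - j : ℕ):ℝ) * (γ*x)^j) * ((γ*x-1)^2 / (((n:ℝ)+1)*γ)) := by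
    rw [Finset.sum_mul]
    exact Finset.sum_congr rfl fun j _ => by simp only [hg]; ring
  rw [hS]
  have hden : ((n:ℝ)+1)*γ ≠ 0 := by positivity
  have hkey3 : (∑ j ∈ range n, ((n - j : ℕ):ℝ) * (γ*x)^j) * (γ*x-1)^2
      = (γ*x)^(n+1) - ((n:ℝ)+1)*(γ*x) + n := by linear_combination key_sum (γ*x) n
  rw [mul_div_assoc', hkey3, div_eq_iff hden]
  field_simp
  ring

/-- Sum-of-squares certificate of `{A ≥ 0, B ≥ 0} ⊢_t A·B ≤ (γ^{t−1} A B^t + (t−1) A/γ)/t`: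
there are SOS polynomials `σ₀, σ₁` with `(γ^{t−1} X^t + (t−1)/γ)/t − X = σ₀ + σ₁·X`
(degrees at most `t`), and multiplying by `A` gives the corresponding identity in
`ℝ[A, X]`, hence the inequality for all reals `A, X ≥ 0`. -/
theorem stmt_12 (γ : ℝ) (hγ : 0 < γ) (t : ℕ) (ht : 1 ≤ t) :
    ∃ σ0 σ1 : Polynomial ℝ, IsSOS σ0 ∧ IsSOS σ1 ∧
      σ0.natDegree ≤ t ∧ (σ1 * Polynomial.X).natDegree ≤ t ∧
      (Polynomial.C (1 / (t : ℝ)) * (Polynomial.C (γ ^ (t - 1)) * Polynomial.X ^ t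
          + Polynomial.C (((t : ℝ) - 1) / γ)) - Polynomial.X
        = σ0 + σ1 * Polynomial.X) ∧
      (MvPolynomial.C (1 / (t : ℝ)) *
          (MvPolynomial.C (γ ^ (t - 1)) * MvPolynomial.X 0 * (MvPolynomial.X 1) ^ t
            + MvPolynomial.C (((t : ℝ) - 1) / γ) * MvPolynomial.X 0)
          - MvPolynomial.X 0 * MvPolynomial.X 1
        = liftX σ0 * MvPolynomial.X 0
          + liftX σ1 * (MvPolynomial.X 0 * MvPolynomial.X 1)) ∧
      (∀ a x : ℝ, 0 ≤ a → 0 ≤ x →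
        a * x ≤ (γ ^ (t - 1) * a * x ^ t + ((t : ℝ) - 1) * a / γ) / t) := by
  obtain ⟨n, rfl⟩ : ∃ n, t = n + 1 := ⟨t - 1, (Nat.succ_pred_eq_of_pos ht).symm⟩
  have hγ' : γ ≠ 0 := ne_of_gt hγ
  set P : Polynomial ℝ := Polynomial.C γ * Polynomial.X - 1 with hP
  set e : ℕ → ℝ := fun m => ((n - 2*m : ℕ):ℝ) * γ^(2*m) / (((n:ℝ)+1)*γ) with he
  set o : ℕ → ℝ := fun m => ((n - (2*m+1) : ℕ):ℝ) * γ^(2*m) / ((n:ℝ)+1) with ho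
  set r0 : ℕ → Polynomial ℝ :=
    fun m => Polynomial.C (Real.sqrt (e m)) * (P * Polynomial.X^m) with hr0
  set r1 : ℕ → Polynomial ℝ :=
    fun m => Polynomial.C (Real.sqrt (o m)) * (P * Polynomial.X^m) with hr1
  set σ0 : Polynomial ℝ := ∑ m ∈ range n, (r0 m)^2 with hσ0
  set σ1 : Polynomial ℝ := ∑ m ∈ range n, (r1 m)^2 with hσ1
  have hCX : (Polynomial.C γ * Polynomial.X).natDegree ≤ 1 :=
    le_trans (Polynomial.natDegree_C_mul_le _ _) Polynomial.natDegree_X.le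
  have hPd : P.natDegree ≤ 1 :=
    le_trans (Polynomial.natDegree_sub_le _ _) (by simp [hCX])
  -- the univariate identity
  have huni : Polynomial.C (1 / ((n+1 : ℕ) : ℝ)) *
        (Polynomial.C (γ ^ (n+1-1)) * Polynomial.X ^ (n+1)
          + Polynomial.C ((((n+1:ℕ) : ℝ) - 1) / γ)) - Polynomial.X
      = σ0 + σ1 * Polynomial.X := by
    apply Polynomial.funext
    intro x
    have := main_real γ hγ n x
    simp only [hσ0, hσ1, hr0, hr1, hP, he, ho, Polynomial.eval_finset_sum,
      Polynomial.eval_mul, Polynomial.eval_add, Polynomial.eval_sub, Polynomial.eval_pow,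
      Polynomial.eval_C, Polynomial.eval_X, Polynomial.eval_one, Nat.add_sub_cancel]
    push_cast
    linear_combination -this
  refine ⟨σ0, σ1, ?_, ?_, ?_, ?_, huni, ?_, ?_⟩
  · exact ⟨n, fun i => r0 i, (Fin.sum_univ_eq_sum_range (fun m => r0 m ^ 2) n).symm⟩
  · exact ⟨n, fun i => r1 i, (Fin.sum_univ_eq_sum_range (fun m => r1 m ^ 2) n).symm⟩
  · -- degree of σ0
    apply Polynomial.natDegree_sum_le_of_forall_le
    intro m hm
    by_cases h2 : 2*m < n
    · rw [Polynomial.natDegree_pow]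
      have hd : (r0 m).natDegree ≤ 1 + m := by
        refine le_trans (Polynomial.natDegree_C_mul_le _ _) ?_
        exact le_trans Polynomial.natDegree_mul_le
          (add_le_add hPd (Polynomial.natDegree_X_pow _).le)
      omega
    · have hz : e m = 0 := by simp [he, Nat.sub_eq_zero_of_le (by omega : n ≤ 2*m)]
      simp [hr0, hz]
  · -- degree of σ1 * X
    refine le_trans Polynomial.natDegree_mul_le ?_
    rw [Polynomial.natDegree_X]
    have hd1 : σ1.natDegree ≤ n := by
      apply Polynomial.natDegree_sum_le_of_forall_le
      intro m hm
      by_cases h2 : 2*m+1 < n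
      · rw [Polynomial.natDegree_pow]
        have hd : (r1 m).natDegree ≤ 1 + m := by
          refine le_trans (Polynomial.natDegree_C_mul_le _ _) ?_
          exact le_trans Polynomial.natDegree_mul_le
            (add_le_add hPd (Polynomial.natDegree_X_pow _).le)
        omega
      · have hz : o m = 0 := by simp [ho, Nat.sub_eq_zero_of_le (by omega : n ≤ 2*m+1)]
        simp [hr1, hz]
    omega
  · -- multivariate identity
    have hmv0 := congrArg (Polynomial.aeval (MvPolynomial.X 1 : MvPolynomial (Fin 2) ℝ)) huni
    simp only [map_sub, map_add, map_mul, map_pow, Polynomial.aeval_X, Polynomial.aeval_C,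
      MvPolynomial.algebraMap_eq] at hmv0
    simp only [← MvPolynomial.C_pow] at hmv0
    simp only [liftX]
    linear_combination (MvPolynomial.X 0 : MvPolynomial (Fin 2) ℝ) * hmv0
  · -- the inequality
    intro a x ha hx
    have hx0 := congrArg (Polynomial.eval x) huni
    simp only [Polynomial.eval_add, Polynomial.eval_mul, Polynomial.eval_sub,
      Polynomial.eval_C, Polynomial.eval_X, Polynomial.eval_pow] at hx0
    have h0 : 0 ≤ Polynomial.eval x σ0 := by
      rw [hσ0, Polynomial.eval_finset_sum]
      exact Finset.sum_nonneg fun m _ => by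
        rw [Polynomial.eval_pow]; positivity
    have h1 : 0 ≤ Polynomial.eval x σ1 := by
      rw [hσ1, Polynomial.eval_finset_sum]
      exact Finset.sum_nonneg fun m _ => by
        rw [Polynomial.eval_pow]; positivity
    have hs : 0 ≤ Polynomial.eval x σ0 + Polynomial.eval x σ1 * x :=
      add_nonneg h0 (mul_nonneg h1 hx)
    have hn1 : (0:ℝ) < (n:ℝ)+1 := by positivity
    simp only [Nat.add_sub_cancel] at hx0 ⊢
    push_cast at hx0 ⊢
    have hineq : x ≤ 1/((n:ℝ)+1) * (γ^n * x^(n+1) + (((n:ℝ)+1)-1)/γ) := by linarith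
    have hfin : (γ^n * a * x^(n+1) + (((n:ℝ)+1)-1)*a/γ)/((n:ℝ)+1)
        = a * (1/((n:ℝ)+1) * (γ^n * x^(n+1) + (((n:ℝ)+1)-1)/γ)) := by
      field_simp
    rw [hfin]
    exact mul_le_mul_of_nonneg_left hineq ha
end
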